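/- arXiv:1908.06343 — 7 statements merged into one kernel-verified Lean document; each statement's English description precedes it below -/
import Mathlib

section
/- Let M > 0, let f : [0, M] → ℂ be continuous, and let ε > 0. Then there exists δ > 0 such that whenever A is a C*-algebra and a, x ∈ A satisfy: a is positive, ‖a‖ ≤ M, ‖x‖ ≤ M, and ‖a x − x a‖ < δ, then ‖f(a) x − x f(a)‖ < ε. -/
/-! Approximate `f` on `[0, M]` by a polynomial `p` within `ε / (4M)` (Weierstrass). Since the
spectrum of `a` lies in `[0, M]`, `‖f(a) - p(a)‖ ≤ ε / (4M)`, which costs at most `ε / 2` in the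
commutator with `x`. The commutator of `p(a)` with `x` is controlled linearly by `‖a x - x a‖`,
with a constant depending only on `p` and `M`, because
`aⁿ⁺¹ x - x aⁿ⁺¹ = aⁿ (a x - x a) + (aⁿ x - x aⁿ) a`. -/

open Filter Topology
open scoped ENNReal

namespace RC

/-- Cuntz subequivalence `a ≾ b` in an algebra: some sequence `vₙ b vₙ*` converges to `a`. -/
def CuntzSubeq {M : Type*} [Mul M] [Star M] [TopologicalSpace M] (a b : M) : Prop :=
  ∃ v : ℕ → M, Tendsto (fun n => v n * b * star (v n)) atTop (𝓝 a)

/-- Cuntz subequivalence with the implementing sequence taken in the subset `S`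
(e.g. a C*-subalgebra). -/
def CuntzSubeqIn {M : Type*} [Mul M] [Star M] [TopologicalSpace M] (S : Set M) (a b : M) :
    Prop :=
  ∃ v : ℕ → M, (∀ n, v n ∈ S) ∧ Tendsto (fun n => v n * b * star (v n)) atTop (𝓝 a)

/-- `(a - ε)₊`, the continuous functional calculus of `a` applied to `t ↦ max (t - ε) 0`,
in a unital algebra. -/
noncomputable def posCut {A : Type*} [Ring A] [StarRing A] [TopologicalSpace A] [Algebra ℝ A]
    [ContinuousFunctionalCalculus ℝ A (IsSelfAdjoint : A → Prop)] (ε : ℝ) (a : A) : A :=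
  cfc (fun t : ℝ => max (t - ε) 0) a

/-- `(a - ε)₊` in a non-unital C*-algebra, via the non-unital functional calculus. -/
noncomputable def posCutN {A : Type*} [NonUnitalCStarAlgebra A] (ε : ℝ) (a : A) : A :=
  cfcₙ (fun t : ℝ => max (t - ε) 0) a

/-- An element of the form `c* c`; in a C*-algebra this is precisely positivity.  It is used
for positivity in matrix algebras over a C*-algebra (which carry no norm in Mathlib). -/
def StarPos {M : Type*} [Mul M] [Star M] (b : M) : Prop := ∃ c : M, b = star c * c

/-- `mulPow b k = b ^ (k + 1)`, defined without a unit. -/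
def mulPow {M : Type*} [Mul M] (b : M) : ℕ → M
  | 0 => b
  | n + 1 => mulPow b n * b

/-- Conditions (i)–(iii) of the definition of a quasitrace: `τ(x*x) = τ(xx*) ≥ 0`,
additivity on selfadjoint decompositions `a + i b`, and linearity on every commutative
closed star subalgebra. -/
def IsQuasitracePre {M : Type*} [NonUnitalRing M] [StarRing M] [Module ℂ M]
    [TopologicalSpace M] (τ : M → ℂ) : Prop :=
  (∀ x : M, τ (star x * x) = τ (x * star x)) ∧
  (∀ x : M, ∃ r : ℝ, 0 ≤ r ∧ τ (star x * x) = r) ∧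
  (∀ a b : M, IsSelfAdjoint a → IsSelfAdjoint b →
      τ (a + Complex.I • b) = τ a + Complex.I * τ b) ∧
  (∀ B : NonUnitalStarSubalgebra ℂ M, IsClosed (B : Set M) →
      (∀ x ∈ B, ∀ y ∈ B, x * y = y * x) →
      (∀ x ∈ B, ∀ y ∈ B, τ (x + y) = τ x + τ y) ∧
        ∀ (c : ℂ), ∀ x ∈ B, τ (c • x) = c * τ x)

/-- A quasitrace (2-quasitrace): conditions (i)–(iii) together with condition (iv),
the existence of an extension to `M₂` satisfying (i)–(iii) with `τ x = τ₂ (x ⊗ e₁₁)`. -/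
def IsQuasitrace {M : Type*} [NonUnitalRing M] [StarRing M] [Module ℂ M]
    [TopologicalSpace M] (τ : M → ℂ) : Prop :=
  IsQuasitracePre τ ∧
    ∃ τ₂ : Matrix (Fin 2) (Fin 2) M → ℂ, IsQuasitracePre τ₂ ∧
      ∀ x : M, τ x = τ₂ (Matrix.single 0 0 x)

/-- `σ` is the canonical extension `τₙ` of the quasitrace `τ` to `Mₙ`:
it is a quasitrace with `σ (a ⊗ e_jj) = τ a` for all `a` and `j`.
By Blanchard–Handelman such an extension exists and is unique. -/
def IsMatrixExt {M : Type*} [NonUnitalRing M] [StarRing M] [Module ℂ M] [TopologicalSpace M]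
    {n : ℕ} (σ : Matrix (Fin n) (Fin n) M → ℂ) (τ : M → ℂ) : Prop :=
  IsQuasitrace σ ∧ ∀ (a : M) (j : Fin n), σ (Matrix.single j j a) = τ a

/-- `d = d_σ(a) = lim_k σ(a^{1/k})`: for every sequence `b k` of positive `(k+1)`-st roots of
`a`, `σ (b k)` converges to `d`.  (In a C*-algebra positive roots exist and are unique, so this
characterizes the usual `d_τ`.) -/
def HasDTau {N : Type*} [Mul N] [Star N] (σ : N → ℂ) (a : N) (d : ℝ) : Prop :=
  ∀ b : ℕ → N, (∀ k, StarPos (b k) ∧ mulPow (b k) k = a) →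
    Tendsto (fun k => (σ (b k)).re) atTop (𝓝 d)

/-- `r`-comparison for the algebra `M` with unit `e`: whenever `a b` are positive elements of a
matrix algebra over `M` with `d_τ(a) + r < d_τ(b)` for every normalized quasitrace `τ`
(evaluated through its canonical matrix extension), then `a ≾ b`. -/
def RComparison {M : Type*} [NonUnitalRing M] [StarRing M] [Module ℂ M] [TopologicalSpace M]
    (e : M) (r : ℝ) : Prop :=
  ∀ (m : ℕ) (a b : Matrix (Fin m) (Fin m) M), StarPos a → StarPos b →
    (∀ (τ : M → ℂ) (σ : Matrix (Fin m) (Fin m) M → ℂ) (da db : ℝ),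
        IsQuasitrace τ → τ e = 1 → IsMatrixExt σ τ →
        HasDTau σ a da → HasDTau σ b db → da + r < db) →
    CuntzSubeq a b

/-- The radius of comparison of the algebra `M` with unit `e`: the infimum (in `ℝ≥0∞`, hence
`∞` if there is none) of all `r ≥ 0` such that `M` has `r`-comparison. -/
noncomputable def radiusCmp {M : Type*} [NonUnitalRing M] [StarRing M] [Module ℂ M]
    [TopologicalSpace M] (e : M) : ℝ≥0∞ :=
  sInf {x : ℝ≥0∞ | ∃ r : ℝ, 0 ≤ r ∧ x = ENNReal.ofReal r ∧ RComparison e r}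

/-- Stable finiteness: for every `n`, no projection in `Mₙ(A)` is Murray–von Neumann
equivalent to a proper subprojection of itself. -/
def StablyFinite (A : Type*) [Ring A] [StarRing A] : Prop :=
  ∀ (n : ℕ) (p q v : Matrix (Fin n) (Fin n) A),
    p * p = p → star p = p → q * q = q → star q = q →
    p * q = q → q ≠ p → star v * v = p → v * star v = q → False

/-- Simplicity of a C*-algebra: the only closed two-sided ideals are `0` and everything. -/
def CStarSimple (A : Type*) [NonUnitalNonAssocRing A] [TopologicalSpace A] : Prop :=
  ∀ I : TwoSidedIdeal A, IsClosed (I : Set A) →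
    (I : Set A) = {0} ∨ (I : Set A) = Set.univ

/-- `p` is full: every closed two-sided ideal containing `p` is everything, i.e. the closed
two-sided ideal generated by `p` is the whole algebra. -/
def IsFullIn {A : Type*} [NonUnitalNonAssocRing A] [TopologicalSpace A] (p : A) : Prop :=
  ∀ I : TwoSidedIdeal A, IsClosed (I : Set A) → p ∈ I → (I : Set A) = Set.univ

/-- The corner `p B p = {x | p x p = x}` of an algebra `B` by a projection `p`,
as a (non-unital) star subalgebra of `B`; its unit is `p`. -/
def cornerAlg {B : Type*} [NonUnitalRing B] [Module ℂ B] [SMulCommClass ℂ B B]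
    [IsScalarTower ℂ B B] [StarRing B] (p : B) (hp1 : p * p = p) (hp2 : star p = p) :
    NonUnitalStarSubalgebra ℂ B where
  carrier := {x | p * x * p = x}
  add_mem' := by
    intro x y hx hy
    simp only [Set.mem_setOf_eq] at *
    rw [mul_add, add_mul, hx, hy]
  zero_mem' := by simp
  mul_mem' := by
    intro x y hx hy
    simp only [Set.mem_setOf_eq] at *
    have hpp : ∀ z : B, p * (p * z) = p * z := fun z => by rw [← mul_assoc, hp1]
    conv_lhs => rw [← hx, ← hy]
    conv_rhs => rw [← hx, ← hy]
    simp only [mul_assoc, hpp, hp1]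
  smul_mem' := by
    intro c x hx
    simp only [Set.mem_setOf_eq] at *
    rw [mul_smul_comm, smul_mul_assoc, hx]
  star_mem' := by
    intro x hx
    simp only [Set.mem_setOf_eq] at *
    conv_rhs => rw [← hx]
    rw [star_mul, star_mul, hp2, mul_assoc]

theorem p_mem_corner {B : Type*} [NonUnitalRing B] [Module ℂ B] [SMulCommClass ℂ B B]
    [IsScalarTower ℂ B B] [StarRing B] (p : B) (hp1 : p * p = p) (hp2 : star p = p) :
    p ∈ cornerAlg p hp1 hp2 := by
  show p * p * p = p
  rw [hp1, hp1]

/-- The fixed point algebra `A^α = {a | α_g a = a ∀ g}` of an action,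
as a star subalgebra of `A`. -/
def fixedAlg {G A : Type*} [Group G] [NonUnitalRing A] [Module ℂ A] [StarRing A]
    (α : G → A ≃⋆ₐ[ℂ] A) : NonUnitalStarSubalgebra ℂ A where
  carrier := {a | ∀ g, α g a = a}
  add_mem' := by
    intro x y hx hy g
    rw [map_add, hx g, hy g]
  zero_mem' := fun g => map_zero (α g)
  mul_mem' := by
    intro x y hx hy g
    rw [map_mul, hx g, hy g]
  smul_mem' := by
    intro c x hx g
    rw [map_smul, hx g]
  star_mem' := by
    intro x hx g
    rw [map_star, hx g]

theorem one_mem_fixedAlg {G A : Type*} [Group G] [Ring A] [Module ℂ A] [StarRing A]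
    (α : G → A ≃⋆ₐ[ℂ] A) : (1 : A) ∈ fixedAlg α := fun g => map_one (α g)

/-- The weak tracial Rokhlin property for an action `α` of a finite group `G` on a unital
C*-algebra. -/
def WeakTracialRokhlin {G A : Type*} [Group G] [Fintype G] [NormedRing A] [StarRing A]
    [PartialOrder A] [Module ℂ A] (α : G → A ≃⋆ₐ[ℂ] A) : Prop :=
  ∀ (ε : ℝ), 0 < ε → ∀ (F : Finset A) (x : A), 0 ≤ x → ‖x‖ = 1 →
    ∃ f : G → A,
      (∀ g, 0 ≤ f g ∧ ‖f g‖ ≤ 1) ∧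
      (∀ g h, g ≠ h → f g * f h = 0) ∧
      (∀ g, ∀ a ∈ F, ‖a * f g - f g * a‖ < ε) ∧
      (∀ g h, ‖α g (f h) - f (g * h)‖ < ε) ∧
      CuntzSubeq (1 - ∑ g, f g) x ∧
      1 - ε < ‖(∑ g, f g) * x * (∑ g, f g)‖

/-- The Rokhlin property for an action `α` of a finite group `G` on a unital C*-algebra. -/
def RokhlinProperty {G A : Type*} [Group G] [Fintype G] [NormedRing A] [StarRing A]
    [Module ℂ A] (α : G → A ≃⋆ₐ[ℂ] A) : Prop :=
  ∀ (ε : ℝ), 0 < ε → ∀ (F : Finset A),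
    ∃ e : G → A,
      (∀ g, e g * e g = e g ∧ star (e g) = e g) ∧
      (∀ g h, g ≠ h → e g * e h = 0) ∧
      (∑ g, e g) = 1 ∧
      (∀ g h, ‖α g (e h) - e (g * h)‖ < ε) ∧
      (∀ g, ∀ a ∈ F, ‖e g * a - a * e g‖ < ε)

end RC

open RC

universe u

open Polynomial

theorem norm_pow_mul_le {A : Type*} [NormedRing A] {a : A} {R : ℝ} (ha : ‖a‖ ≤ R) (n : ℕ)
    (y : A) : ‖a ^ n * y‖ ≤ R ^ n * ‖y‖ := by
  rcases n.eq_zero_or_pos with rfl | hn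
  · simp
  · calc ‖a ^ n * y‖ ≤ ‖a ^ n‖ * ‖y‖ := norm_mul_le _ _
      _ ≤ R ^ n * ‖y‖ := by
        gcongr
        exact (norm_pow_le' a hn).trans (pow_le_pow_left₀ (norm_nonneg a) ha n)

theorem norm_pow_mul_sub_mul_pow_le {A : Type*} [NormedRing A] {a : A} {R : ℝ} (ha : ‖a‖ ≤ R)
    (x : A) (n : ℕ) :
    ‖a ^ n * x - x * a ^ n‖ ≤ n * R ^ (n - 1) * ‖a * x - x * a‖ := by
  have hR : 0 ≤ R := (norm_nonneg a).trans ha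
  induction n with
  | zero => simp
  | succ n ih =>
    have hsplit : a ^ (n + 1) * x - x * a ^ (n + 1)
        = a ^ n * (a * x - x * a) + (a ^ n * x - x * a ^ n) * a := by
      simp only [pow_succ]; noncomm_ring
    have hlast : (n * R ^ (n - 1)) * R = n * R ^ n := by
      rcases n.eq_zero_or_pos with rfl | hn
      · simp
      · rw [mul_assoc, ← pow_succ, Nat.sub_add_cancel hn]
    calc ‖a ^ (n + 1) * x - x * a ^ (n + 1)‖
        ≤ ‖a ^ n * (a * x - x * a)‖ + ‖(a ^ n * x - x * a ^ n) * a‖ := by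
          rw [hsplit]; exact norm_add_le _ _
      _ ≤ R ^ n * ‖a * x - x * a‖ + n * R ^ (n - 1) * ‖a * x - x * a‖ * R := by
          gcongr
          · exact norm_pow_mul_le ha n _
          · exact (norm_mul_le _ _).trans (by gcongr)
      _ = (n + 1 : ℕ) * R ^ (n + 1 - 1) * ‖a * x - x * a‖ := by
          rw [Nat.add_sub_cancel, mul_right_comm _ ‖a * x - x * a‖, hlast]; push_cast; ring

noncomputable def commutatorBound {𝕜 : Type*} [NormedField 𝕜] (p : 𝕜[X]) (R : ℝ) : ℝ :=
  ∑ i ∈ Finset.range (p.natDegree + 1), ‖p.coeff i‖ * (i * R ^ (i - 1))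

theorem commutatorBound_nonneg {𝕜 : Type*} [NormedField 𝕜] (p : 𝕜[X]) {R : ℝ} (hR : 0 ≤ R) :
    0 ≤ commutatorBound p R :=
  Finset.sum_nonneg fun _ _ => by positivity

theorem norm_aeval_mul_sub_mul_aeval_le {𝕜 A : Type*} [NormedField 𝕜] [NormedRing A]
    [NormedAlgebra 𝕜 A] (p : 𝕜[X]) {a : A} {R : ℝ} (ha : ‖a‖ ≤ R) (x : A) :
    ‖aeval a p * x - x * aeval a p‖ ≤ commutatorBound p R * ‖a * x - x * a‖ := by
  have hsum : aeval a p * x - x * aeval a p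
      = ∑ i ∈ Finset.range (p.natDegree + 1), p.coeff i • (a ^ i * x - x * a ^ i) := by
    simp only [aeval_eq_sum_range, Finset.sum_mul, Finset.mul_sum, ← Finset.sum_sub_distrib,
      smul_mul_assoc, mul_smul_comm, smul_sub]
  rw [hsum, commutatorBound, Finset.sum_mul]
  refine (norm_sum_le _ _).trans (Finset.sum_le_sum fun i _ => ?_)
  rw [norm_smul, mul_assoc]
  gcongr
  exact norm_pow_mul_sub_mul_pow_le ha x i

theorem exists_polynomial_norm_sub_lt_of_continuousOn {a b : ℝ} {f : ℝ → ℂ}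
    (hf : ContinuousOn f (Set.Icc a b)) {ε : ℝ} (hε : 0 < ε) :
    ∃ p : ℂ[X], ∀ t ∈ Set.Icc a b, ‖f t - p.eval (t : ℂ)‖ < ε := by
  obtain ⟨p₁, hp₁⟩ := exists_polynomial_near_of_continuousOn a b (fun t => (f t).re)
    (Complex.continuous_re.comp_continuousOn hf) (ε / 2) (half_pos hε)
  obtain ⟨p₂, hp₂⟩ := exists_polynomial_near_of_continuousOn a b (fun t => (f t).im)
    (Complex.continuous_im.comp_continuousOn hf) (ε / 2) (half_pos hε)
  refine ⟨p₁.map Complex.ofRealHom + C Complex.I * p₂.map Complex.ofRealHom, fun t ht => ?_⟩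
  have h₁ := hp₁ t ht
  have h₂ := hp₂ t ht
  have hmap (p : ℝ[X]) : (p.map Complex.ofRealHom).eval (t : ℂ) = ((p.eval t : ℝ) : ℂ) :=
    (eval_map _ _).trans (eval₂_at_apply Complex.ofRealHom t)
  calc ‖f t - _‖ ≤ |(f t).re - p₁.eval t| + |(f t).im - p₂.eval t| := by
        refine (Complex.norm_le_abs_re_add_abs_im _).trans_eq ?_
        simp [hmap]
    _ < ε := by rw [abs_sub_comm] at h₁ h₂; linarith

theorem norm_mul_sub_mul_le {A : Type*} [NormedRing A] (b c x : A) :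
    ‖b * x - x * b‖ ≤ 2 * ‖b - c‖ * ‖x‖ + ‖c * x - x * c‖ := by
  have hsplit : b * x - x * b = (b - c) * x - x * (b - c) + (c * x - x * c) := by noncomm_ring
  calc ‖b * x - x * b‖ ≤ ‖(b - c) * x‖ + ‖x * (b - c)‖ + ‖c * x - x * c‖ := by
        rw [hsplit]; exact (norm_add_le _ _).trans (by gcongr; exact norm_sub_le _ _)
    _ ≤ 2 * ‖b - c‖ * ‖x‖ + ‖c * x - x * c‖ := by
        have h₁ := norm_mul_le (b - c) x
        have h₂ := norm_mul_le x (b - c)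
        linarith

section CStarAlgebra

variable {A : Type*} [CStarAlgebra A] [PartialOrder A] [StarOrderedRing A]

theorem re_mem_Icc_of_mem_spectrum {a : A} (ha : 0 ≤ a) {z : ℂ} (hz : z ∈ spectrum ℂ a) :
    z.re ∈ Set.Icc 0 ‖a‖ := by
  have hzre : z = z.re := (IsSelfAdjoint.of_nonneg ha).mem_spectrum_eq_re hz
  have : Nontrivial A := not_subsingleton_iff_nontrivial.mp fun _ => by
    simp [spectrum.of_subsingleton] at hz
  refine ⟨spectrum_nonneg_of_nonneg ha ?_, ?_⟩
  · rw [← spectrum.algebraMap_mem_iff ℂ]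
    exact hzre ▸ hz
  · calc z.re ≤ ‖z‖ := Complex.re_le_norm z
      _ ≤ ‖a‖ := spectrum.norm_le_norm_of_mem hz

theorem norm_cfc_sub_aeval_le {a : A} (ha : 0 ≤ a) {M : ℝ} (haM : ‖a‖ ≤ M) {f : ℝ → ℂ}
    (hf : ContinuousOn f (Set.Icc 0 M)) (p : ℂ[X]) {η : ℝ} (hη : 0 ≤ η)
    (hfp : ∀ t ∈ Set.Icc 0 M, ‖f t - p.eval (t : ℂ)‖ ≤ η) :
    ‖cfc (fun z : ℂ => f z.re) a - aeval a p‖ ≤ η := by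
  have hre (z : ℂ) (hz : z ∈ spectrum ℂ a) : z.re ∈ Set.Icc 0 M :=
    Set.Icc_subset_Icc_right haM (re_mem_Icc_of_mem_spectrum ha hz)
  rw [← cfc_polynomial p a (IsSelfAdjoint.of_nonneg ha).isStarNormal,
    ← cfc_sub (fun z : ℂ => f z.re) _ a (hf.comp Complex.continuous_re.continuousOn hre)
      (Polynomial.continuous _).continuousOn]
  refine norm_cfc_le hη fun z hz => ?_
  rw [(IsSelfAdjoint.of_nonneg ha).mem_spectrum_eq_re hz, Complex.ofReal_re]
  exact hfp _ (hre z hz)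

end CStarAlgebra

/-- Let `M > 0`, let `f : [0, M] → ℂ` be continuous, and let `ε > 0`.  Then there
exists `δ > 0` such that whenever `A` is a C*-algebra and `a, x ∈ A` satisfy `a ≥ 0`,
`‖a‖ ≤ M`, `‖x‖ ≤ M` and `‖a x - x a‖ < δ`, then `‖f(a) x - x f(a)‖ < ε`.  Here `f(a)` is the
continuous functional calculus of the positive element `a` (whose spectrum lies in `[0, M]`)
applied to `f`, realized via the complex functional calculus. -/
theorem statement0 (M : ℝ) (hM : 0 < M) (f : ℝ → ℂ) (hf : ContinuousOn f (Set.Icc 0 M))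
    (ε : ℝ) (hε : 0 < ε) :
    ∃ δ : ℝ, 0 < δ ∧
      ∀ (A : Type u) [CStarAlgebra A] [PartialOrder A] [StarOrderedRing A],
        ∀ a x : A, 0 ≤ a → ‖a‖ ≤ M → ‖x‖ ≤ M → ‖a * x - x * a‖ < δ →
          ‖cfc (fun z : ℂ => f z.re) a * x - x * cfc (fun z : ℂ => f z.re) a‖ < ε := by
  obtain ⟨p, hp⟩ := exists_polynomial_norm_sub_lt_of_continuousOn hf (ε := ε / (4 * M))
    (by positivity)
  have hC := commutatorBound_nonneg p hM.le
  refine ⟨ε / (2 * (commutatorBound p M + 1)), by positivity, ?_⟩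
  intro A _ _ _ a x ha haM hxM hax
  have happrox := norm_cfc_sub_aeval_le ha haM hf p (by positivity) fun t ht => (hp t ht).le
  have hcomm : commutatorBound p M * ‖a * x - x * a‖ < ε / 2 :=
    calc commutatorBound p M * ‖a * x - x * a‖
        ≤ commutatorBound p M * (ε / (2 * (commutatorBound p M + 1))) := by gcongr
      _ < ε / 2 := by
        rw [mul_div_assoc', div_lt_div_iff₀ (by positivity) two_pos]
        nlinarith
  calc _ ≤ 2 * (ε / (4 * M)) * M + commutatorBound p M * ‖a * x - x * a‖ := by
        refine (norm_mul_sub_mul_le _ (aeval a p) x).trans ?_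
        gcongr
        exact norm_aeval_mul_sub_mul_aeval_le p haM x
    _ < ε := by
        have : 2 * (ε / (4 * M)) * M = ε / 2 := by field_simp; ring
        linarith
end

section
/- Let f, g : [0, ∞) → [0, ∞) be continuous functions with f(0) = g(0) = 0, let ε > 0, and let M > 0. Then there exists δ > 0 such that whenever A is a C*-algebra and a, b are positive elements of A satisfying ‖a b‖ < δ and ‖a‖, ‖b‖ ≤ M, then ‖f(a) g(b)‖ < ε. -/
open Filter Topology
open scoped ENNReal

open RC

universe u

/-!
Approximate `f` and `g` uniformly on `[0, M]` by polynomials `p`, `q` without constant term.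
Then `p(a) q(b)` is a combination of the products `a ^ (i + 1) b ^ (j + 1)`, each of norm at most
`M ^ (i + j) ‖a b‖`, so `‖p(a) q(b)‖ ≤ K ‖a b‖` with `K` depending only on `p`, `q` and `M`.
Since the functional calculus is isometric, `‖f(a) - p(a)‖` and `‖g(b) - q(b)‖` are bounded by
the uniform errors on `[0, M] ⊇ σ(a), σ(b)`, whatever the algebra; `q` is chosen after `p` so that
its error can absorb the size of `p(a)`.
-/

open Polynomial

theorem norm_mul_le_of_approx {R : Type*} [NonUnitalSeminormedRing R] (x x' y y' : R) :
    ‖x * y‖ ≤ ‖x - x'‖ * ‖y‖ + ‖x'‖ * ‖y - y'‖ + ‖x' * y'‖ := by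
  have h : x * y = (x - x') * y + x' * (y - y') + x' * y' := by noncomm_ring
  rw [h]
  exact norm_add₃_le.trans (add_le_add_three (norm_mul_le _ _) (norm_mul_le _ _) le_rfl)

theorem norm_mulPow_mul_le {R : Type*} [NonUnitalSeminormedRing R] (a x : R) (i : ℕ) :
    ‖mulPow a i * x‖ ≤ ‖a‖ ^ i * ‖a * x‖ := by
  induction i generalizing x with
  | zero => simp [mulPow]
  | succ n ih =>
    calc ‖mulPow a (n + 1) * x‖ = ‖mulPow a n * (a * x)‖ := by rw [mulPow, mul_assoc]
      _ ≤ ‖a‖ ^ n * ‖a * (a * x)‖ := ih _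
      _ ≤ ‖a‖ ^ n * (‖a‖ * ‖a * x‖) := by gcongr; exact norm_mul_le _ _
      _ = ‖a‖ ^ (n + 1) * ‖a * x‖ := by ring

theorem norm_mul_mulPow_le {R : Type*} [NonUnitalSeminormedRing R] (b x : R) (j : ℕ) :
    ‖x * mulPow b j‖ ≤ ‖x * b‖ * ‖b‖ ^ j := by
  induction j with
  | zero => simp [mulPow]
  | succ n ih =>
    calc ‖x * mulPow b (n + 1)‖ = ‖x * mulPow b n * b‖ := by rw [mulPow, mul_assoc]
      _ ≤ ‖x * mulPow b n‖ * ‖b‖ := norm_mul_le _ _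
      _ ≤ ‖x * b‖ * ‖b‖ ^ n * ‖b‖ := by gcongr
      _ = ‖x * b‖ * ‖b‖ ^ (n + 1) := by ring

theorem mul_div_add_one_lt {c x : ℝ} (hc : 0 ≤ c) (hx : 0 < x) : c * (x / (c + 1)) < x := by
  rw [mul_div_assoc', div_lt_iff₀ (by positivity)]
  nlinarith

theorem exists_bound_of_continuousOn_Icc {M : ℝ} (hM : 0 ≤ M) {f : ℝ → ℝ}
    (hf : ContinuousOn f (Set.Icc 0 M)) : ∃ C, 0 ≤ C ∧ ∀ x ∈ Set.Icc 0 M, |f x| ≤ C := by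
  obtain ⟨C, hC⟩ := isCompact_Icc.exists_bound_of_continuousOn hf
  exact ⟨C, (abs_nonneg _).trans (hC 0 ⟨le_rfl, hM⟩), hC⟩

theorem exists_polynomial_coeff_zero_near {M : ℝ} (hM : 0 ≤ M) {f : ℝ → ℝ}
    (hf : ContinuousOn f (Set.Icc 0 M)) (hf0 : f 0 = 0) {η : ℝ} (hη : 0 < η) :
    ∃ p : ℝ[X], p.coeff 0 = 0 ∧ ∀ x ∈ Set.Icc 0 M, |f x - p.eval x| ≤ η := by
  obtain ⟨p, hp⟩ := exists_polynomial_near_of_continuousOn 0 M f hf (η / 2) (half_pos hη)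
  refine ⟨p - C (p.coeff 0), by simp, fun x hx => ?_⟩
  have hp0 : |p.coeff 0| < η / 2 := by
    simpa [hf0, coeff_zero_eq_eval_zero] using hp 0 ⟨le_rfl, hM⟩
  calc |f x - (p - C (p.coeff 0)).eval x|
      = |(f x - p.eval x) + p.coeff 0| := by
        rw [eval_sub, eval_C, sub_sub_eq_add_sub, add_sub_right_comm]
    _ ≤ |f x - p.eval x| + |p.coeff 0| := abs_add_le _ _
    _ ≤ η := by rw [abs_sub_comm]; linarith [hp x hx]

section CStarAlgebra

variable {A : Type*} [NonUnitalCStarAlgebra A]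

theorem cfcₙ_pow_succ_eq_mulPow {a : A} (ha : IsSelfAdjoint a) (i : ℕ) :
    cfcₙ (fun t : ℝ => t ^ (i + 1)) a = mulPow a i := by
  induction i with
  | zero => simpa [mulPow] using cfcₙ_id' ℝ a
  | succ n ih =>
    simp only [pow_succ _ (n + 1)]
    rw [cfcₙ_mul (fun t : ℝ => t ^ (n + 1)) (fun t : ℝ => t) a, ih, cfcₙ_id' ℝ a, mulPow]

theorem cfcₙ_eval_eq_sum_mulPow {a : A} (ha : IsSelfAdjoint a) {p : ℝ[X]} (hp : p.coeff 0 = 0) :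
    cfcₙ (fun t : ℝ => p.eval t) a
      = ∑ i ∈ Finset.range p.natDegree, p.coeff (i + 1) • mulPow a i := by
  have h : (fun t : ℝ => p.eval t)
      = ∑ i ∈ Finset.range p.natDegree, fun t : ℝ => p.coeff (i + 1) * t ^ (i + 1) := by
    ext t
    simp [eval_eq_sum_range, Finset.sum_range_succ', hp, Finset.sum_apply]
  rw [h, cfcₙ_sum _ a _ (fun i _ => by fun_prop) (fun i _ => by simp)]
  refine Finset.sum_congr rfl fun i _ => ?_
  rw [cfcₙ_const_mul _ _ a, cfcₙ_pow_succ_eq_mulPow ha i]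

theorem norm_cfcₙ_eval_mul_le {a : A} (ha : IsSelfAdjoint a) {M : ℝ} (haM : ‖a‖ ≤ M)
    {p : ℝ[X]} (hp : p.coeff 0 = 0) (x : A) :
    ‖cfcₙ (fun t : ℝ => p.eval t) a * x‖
      ≤ (∑ i ∈ Finset.range p.natDegree, |p.coeff (i + 1)| * M ^ i) * ‖a * x‖ := by
  rw [cfcₙ_eval_eq_sum_mulPow ha hp, Finset.sum_mul, Finset.sum_mul]
  refine (norm_sum_le _ _).trans (Finset.sum_le_sum fun i _ => ?_)
  rw [smul_mul_assoc, norm_smul, Real.norm_eq_abs, mul_assoc]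
  gcongr
  exact (norm_mulPow_mul_le a x i).trans (by gcongr)

theorem norm_mul_cfcₙ_eval_le {b : A} (hb : IsSelfAdjoint b) {M : ℝ} (hbM : ‖b‖ ≤ M)
    {q : ℝ[X]} (hq : q.coeff 0 = 0) (x : A) :
    ‖x * cfcₙ (fun t : ℝ => q.eval t) b‖
      ≤ ‖x * b‖ * ∑ j ∈ Finset.range q.natDegree, |q.coeff (j + 1)| * M ^ j := by
  rw [cfcₙ_eval_eq_sum_mulPow hb hq, Finset.mul_sum, Finset.mul_sum]
  refine (norm_sum_le _ _).trans (Finset.sum_le_sum fun j _ => ?_)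
  rw [mul_smul_comm, norm_smul, Real.norm_eq_abs, mul_left_comm]
  gcongr
  exact (norm_mul_mulPow_le b x j).trans (by gcongr)

theorem norm_cfcₙ_eval_mul_cfcₙ_eval_le {a b : A} (ha : IsSelfAdjoint a) (hb : IsSelfAdjoint b)
    {M : ℝ} (haM : ‖a‖ ≤ M) (hbM : ‖b‖ ≤ M) {p q : ℝ[X]} (hp : p.coeff 0 = 0)
    (hq : q.coeff 0 = 0) :
    ‖cfcₙ (fun t : ℝ => p.eval t) a * cfcₙ (fun t : ℝ => q.eval t) b‖
      ≤ (∑ i ∈ Finset.range p.natDegree, |p.coeff (i + 1)| * M ^ i)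
        * (∑ j ∈ Finset.range q.natDegree, |q.coeff (j + 1)| * M ^ j) * ‖a * b‖ := by
  refine (norm_cfcₙ_eval_mul_le ha haM hp _).trans ?_
  have hM : 0 ≤ M := (norm_nonneg a).trans haM
  rw [mul_assoc]
  gcongr
  exact (norm_mul_cfcₙ_eval_le hb hbM hq _).trans_eq (mul_comm _ _)

variable [PartialOrder A] [StarOrderedRing A]

theorem quasispectrum_subset_Icc_of_nonneg {a : A} (ha : 0 ≤ a) {M : ℝ} (haM : ‖a‖ ≤ M) :
    quasispectrum ℝ a ⊆ Set.Icc 0 M := by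
  intro x hx
  have hx0 : 0 ≤ x := quasispectrum_nonneg_of_nonneg a ha x hx
  refine ⟨hx0, le_trans ?_ haM⟩
  rw [Unitization.quasispectrum_eq_spectrum_inr' ℝ ℂ] at hx
  simpa [abs_of_nonneg hx0, Unitization.norm_inr] using spectrum.norm_le_norm_of_mem hx

theorem norm_cfcₙ_le_of_Icc {a : A} (ha : 0 ≤ a) {M : ℝ} (haM : ‖a‖ ≤ M) {f : ℝ → ℝ} {C : ℝ}
    (hf : ∀ x ∈ Set.Icc 0 M, |f x| ≤ C) : ‖cfcₙ f a‖ ≤ C :=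
  norm_cfcₙ_le fun x hx => hf x (quasispectrum_subset_Icc_of_nonneg ha haM hx)

theorem norm_cfcₙ_sub_le_of_Icc {a : A} (ha : 0 ≤ a) {M : ℝ} (haM : ‖a‖ ≤ M) {f g : ℝ → ℝ}
    (hf : ContinuousOn f (Set.Icc 0 M)) (hg : ContinuousOn g (Set.Icc 0 M))
    (hf0 : f 0 = 0) (hg0 : g 0 = 0) {η : ℝ} (hfg : ∀ x ∈ Set.Icc 0 M, |f x - g x| ≤ η) :
    ‖cfcₙ f a - cfcₙ g a‖ ≤ η := by
  have hσ := quasispectrum_subset_Icc_of_nonneg ha haM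
  rw [← cfcₙ_sub f g a (hf.mono hσ) hf0 (hg.mono hσ) hg0]
  exact norm_cfcₙ_le_of_Icc ha haM (by simpa using hfg)

end CStarAlgebra

theorem statement1_general (f g : ℝ → ℝ)
    (hf : ContinuousOn f (Set.Ici 0)) (hg : ContinuousOn g (Set.Ici 0))
    (hf0 : f 0 = 0) (hg0 : g 0 = 0)
    (ε : ℝ) (hε : 0 < ε) (M : ℝ) (hM : 0 < M) :
    ∃ δ : ℝ, 0 < δ ∧
      ∀ (A : Type u) [NonUnitalCStarAlgebra A] [PartialOrder A] [StarOrderedRing A],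
        ∀ a b : A, 0 ≤ a → 0 ≤ b → ‖a * b‖ < δ → ‖a‖ ≤ M → ‖b‖ ≤ M →
          ‖cfcₙ f a * cfcₙ g b‖ < ε := by
  replace hf : ContinuousOn f (Set.Icc 0 M) := hf.mono Set.Icc_subset_Ici_self
  replace hg : ContinuousOn g (Set.Icc 0 M) := hg.mono Set.Icc_subset_Ici_self
  have hε3 : 0 < ε / 3 := by positivity
  obtain ⟨Cg, hCg0, hCg⟩ := exists_bound_of_continuousOn_Icc hM.le hg
  obtain ⟨p, hp0, hfp⟩ := exists_polynomial_coeff_zero_near hM.le hf hf0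
    (div_pos hε3 (by positivity : 0 < Cg + 1))
  obtain ⟨Cp, hCp0, hCp⟩ := exists_bound_of_continuousOn_Icc hM.le p.continuous.continuousOn
  obtain ⟨q, hq0, hgq⟩ := exists_polynomial_coeff_zero_near hM.le hg hg0
    (div_pos hε3 (by positivity : 0 < Cp + 1))
  set Kp := ∑ i ∈ Finset.range p.natDegree, |p.coeff (i + 1)| * M ^ i
  set Kq := ∑ j ∈ Finset.range q.natDegree, |q.coeff (j + 1)| * M ^ j
  have hK : 0 ≤ Kp * Kq := by positivity
  refine ⟨ε / 3 / (Kp * Kq + 1), by positivity, fun A _ _ _ a b ha hb hab haM hbM => ?_⟩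
  set pa := cfcₙ (fun t => p.eval t) a
  set qb := cfcₙ (fun t => q.eval t) b
  calc ‖cfcₙ f a * cfcₙ g b‖
      ≤ ‖cfcₙ f a - pa‖ * ‖cfcₙ g b‖ + ‖pa‖ * ‖cfcₙ g b - qb‖ + ‖pa * qb‖ :=
        norm_mul_le_of_approx ..
    _ ≤ ε / 3 / (Cg + 1) * Cg + Cp * (ε / 3 / (Cp + 1)) + Kp * Kq * ‖a * b‖ := by
      gcongr
      · exact norm_cfcₙ_sub_le_of_Icc ha haM hf p.continuous.continuousOn hf0
          (by simp [← coeff_zero_eq_eval_zero, hp0]) hfp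
      · exact norm_cfcₙ_le_of_Icc hb hbM hCg
      · exact norm_cfcₙ_le_of_Icc ha haM hCp
      · exact norm_cfcₙ_sub_le_of_Icc hb hbM hg q.continuous.continuousOn hg0
          (by simp [← coeff_zero_eq_eval_zero, hq0]) hgq
      · exact norm_cfcₙ_eval_mul_cfcₙ_eval_le ha.isSelfAdjoint hb.isSelfAdjoint haM hbM hp0 hq0
    _ < ε / 3 + ε / 3 + ε / 3 := by
      have hKab : Kp * Kq * ‖a * b‖ < ε / 3 :=
        (mul_le_mul_of_nonneg_left hab.le hK).trans_lt (mul_div_add_one_lt hK hε3)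
      linarith [mul_div_add_one_lt hCg0 hε3, mul_div_add_one_lt hCp0 hε3]
    _ = ε := by ring

/-- Let `f, g : [0, ∞) → [0, ∞)` be continuous with `f 0 = g 0 = 0`, let `ε > 0`
and `M > 0`.  Then there is `δ > 0` such that whenever `A` is a C*-algebra and `a, b ≥ 0` in `A`
satisfy `‖a b‖ < δ` and `‖a‖, ‖b‖ ≤ M`, then `‖f(a) g(b)‖ < ε`, where `f(a)`, `g(b)` are given
by the (non-unital) continuous functional calculus. -/
theorem statement1 (f g : ℝ → ℝ)
    (hf : ContinuousOn f (Set.Ici 0)) (hg : ContinuousOn g (Set.Ici 0))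
    (hf0 : f 0 = 0) (hg0 : g 0 = 0)
    (hfnn : ∀ t ∈ Set.Ici (0 : ℝ), 0 ≤ f t) (hgnn : ∀ t ∈ Set.Ici (0 : ℝ), 0 ≤ g t)
    (ε : ℝ) (hε : 0 < ε) (M : ℝ) (hM : 0 < M) :
    ∃ δ : ℝ, 0 < δ ∧
      ∀ (A : Type u) [NonUnitalCStarAlgebra A] [PartialOrder A] [StarOrderedRing A],
        ∀ a b : A, 0 ≤ a → 0 ≤ b → ‖a * b‖ < δ → ‖a‖ ≤ M → ‖b‖ ≤ M →
          ‖cfcₙ f a * cfcₙ g b‖ < ε :=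
  statement1_general f g hf hg hf0 hg0 ε hε M hM
end

section
/- Let A be a unital C*-algebra, let a, g ∈ A satisfy 0 ≤ a ≤ 1 and 0 ≤ g ≤ 1, and let ε₁, ε₂ ≥ 0. Then (a − (ε₁ + ε₂))₊ is Cuntz subequivalent in M₂(A) to the diagonal element ((1 − g) a (1 − g) − ε₁)₊ ⊕ (g − ε₂/2)₊; that is, (a − (ε₁ + ε₂))₊ ⊕ 0 ≾ diag( ((1−g)a(1−g) − ε₁)₊ , (g − ε₂/2)₊ ) in M₂(A). -/
open Filter Topology
open scoped ENNReal

open RC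

/-!
Put `h = 1 - g` and `q = (1 - h²)^(1/2)`. Then `v = h a^(1/2)` and `u = q a^(1/2)` satisfy
`v*v + u*u = a`, `vv* = (1 - g) a (1 - g)` and `uu* = q a q ≤ q² = 2g - g² ≤ 2g`.
Since `a - (ε₁ + ε₂) ≤ (v*v - ε₁)₊ + (u*u - ε₂)₊`, the element `(a - (ε₁ + ε₂))₊` is Cuntz
below this sum. Each summand may be moved from `x*x` to `xx*`, and
`(uu* - ε₂)₊ ≾ (2g - ε₂)₊ = 2 (g - ε₂/2)₊ ≾ (g - ε₂/2)₊`.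
Finally `e + f ≾ e ⊕ f` in `M₂`, conjugating by the row `(1 1)`.
-/

open Set

theorem SemiconjBy.aeval {R B : Type*} [CommSemiring R] [Semiring B] [Algebra R B] {a x y : B}
    (h : SemiconjBy a x y) (p : Polynomial R) :
    SemiconjBy a (Polynomial.aeval x p) (Polynomial.aeval y p) := by
  induction p using Polynomial.induction_on' with
  | add p q hp hq => simpa only [map_add] using hp.add_right hq
  | monomial n r =>
    simp only [Polynomial.aeval_monomial]
    exact SemiconjBy.mul_right (Algebra.commute_algebraMap_right r a) (h.pow_right n)

section CFC

variable {A : Type*} [CStarAlgebra A]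

theorem cfc_id_sub_const {x : A} (hx : IsSelfAdjoint x) (ε : ℝ) :
    cfc (fun t : ℝ => t - ε) x = x - algebraMap ℝ A ε := by
  rw [cfc_sub (fun t : ℝ => t) (fun _ => ε) x, cfc_id' ℝ x, cfc_const ε x]

theorem mul_cfc_star_mul_self (u : A) {f : ℝ → ℝ} (hf : Continuous f) :
    u * cfc f (star u * u) = cfc f (u * star u) * u := by
  nontriviality A
  set R := max ‖star u * u‖ ‖u * star u‖
  choose P hP using fun n : ℕ => exists_polynomial_near_of_continuousOn (-R) R f
    hf.continuousOn (1 / (n + 1)) Nat.one_div_pos_of_nat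
  have hunif : TendstoUniformlyOn (fun n => (P n).eval) f atTop (Icc (-R) R) :=
    Metric.tendstoUniformlyOn_iff.mpr fun ε hε =>
      (tendsto_one_div_add_atTop_nhds_zero_nat.eventually (gt_mem_nhds hε)).mono
        fun n hn t ht => by rw [Real.dist_eq, abs_sub_comm]; exact (hP n t ht).trans hn
  have hlim : ∀ x : A, ‖x‖ ≤ R →
      Tendsto (fun n => cfc (P n).eval x) atTop (𝓝 (cfc f x)) := fun x hx =>
    tendsto_cfc_fun
      (hunif.mono fun s hs => abs_le.mp ((spectrum.norm_le_norm_of_mem hs).trans hx))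
      (Eventually.of_forall fun n => (P n).continuousOn)
  have hpoly : ∀ n, u * cfc (P n).eval (star u * u) = cfc (P n).eval (u * star u) * u := by
    intro n
    rw [cfc_polynomial (P n) (star u * u), cfc_polynomial (P n) (u * star u)]
    exact SemiconjBy.aeval (mul_assoc u (star u) u).symm (P n)
  exact tendsto_nhds_unique (((hlim _ (le_max_left _ _)).const_mul u).congr hpoly)
    ((hlim _ (le_max_right _ _)).mul_const u)

end CFC

namespace RC

section Topological

variable {M : Type*} [Semigroup M] [StarMul M] [TopologicalSpace M]

theorem CuntzSubeq.mem_closure {a b : M} (h : CuntzSubeq a b) :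
    a ∈ closure (range fun v => v * b * star v) :=
  let ⟨v, hv⟩ := h
  mem_closure_of_tendsto hv (Eventually.of_forall fun n => mem_range_self (v n))

theorem cuntzSubeq_iff_mem_closure [FrechetUrysohnSpace M] {a b : M} :
    CuntzSubeq a b ↔ a ∈ closure (range fun v => v * b * star v) := by
  refine ⟨CuntzSubeq.mem_closure, fun h => ?_⟩
  obtain ⟨x, hx, hlim⟩ := mem_closure_iff_seq_limit.mp h
  choose v hv using hx
  exact ⟨v, by simpa only [hv] using hlim⟩

theorem cuntzSubeq_conj (v b : M) : CuntzSubeq (v * b * star v) b :=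
  ⟨fun _ => v, tendsto_const_nhds⟩

variable [FrechetUrysohnSpace M]

theorem cuntzSubeq_of_mem_closure {a b : M} (h : a ∈ closure {x | CuntzSubeq x b}) :
    CuntzSubeq a b := by
  rw [cuntzSubeq_iff_mem_closure]
  exact closure_minimal (fun x hx => cuntzSubeq_iff_mem_closure.mp hx) isClosed_closure h

theorem CuntzSubeq.trans [ContinuousMul M] {a b c : M} (hab : CuntzSubeq a b)
    (hbc : CuntzSubeq b c) : CuntzSubeq a c := by
  set S := closure (range fun v => v * c * star v)
  have hconj : ∀ w, MapsTo (fun x => w * x * star w) S S := fun w =>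
    MapsTo.closure (fun _ ⟨v, hv⟩ => ⟨w * v, by simp only [← hv, star_mul, mul_assoc]⟩)
      ((continuous_const_mul w).mul continuous_const)
  have hb : b ∈ S := hbc.mem_closure
  rw [cuntzSubeq_iff_mem_closure]
  exact closure_minimal (range_subset_iff.mpr fun w => hconj w hb) isClosed_closure
    hab.mem_closure

end Topological

section Matrix

open Matrix

variable {R : Type*} [Semiring R] [StarRing R] [TopologicalSpace R]

theorem cuntzSubeq_zero_left (b : R) : CuntzSubeq 0 b := by
  simpa using cuntzSubeq_conj (0 : R) b

theorem CuntzSubeq.diagonal {n : Type*} [Fintype n] [DecidableEq n] {d d' : n → R}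
    (h : ∀ i, CuntzSubeq (d i) (d' i)) : CuntzSubeq (diagonal d) (diagonal d') := by
  choose v hv using h
  refine ⟨fun k => Matrix.diagonal fun i => v i k, ?_⟩
  simp only [star_eq_conjTranspose, diagonal_conjTranspose, diagonal_mul_diagonal]
  exact (continuous_id.matrix_diagonal.tendsto _).comp (tendsto_pi_nhds.mpr hv)

theorem cuntzSubeq_diagonal_add (e f : R) :
    CuntzSubeq (Matrix.diagonal ![e + f, 0]) (Matrix.diagonal ![e, f]) := by
  have hconj : Matrix.diagonal ![e + f, 0] = Matrix.of ![![1, 1], ![0, 0]] *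
      Matrix.diagonal ![e, f] * star (Matrix.of ![![1, 1], ![0, 0]]) := by
    ext i j
    fin_cases i <;> fin_cases j <;>
      simp [Matrix.mul_apply, Fin.sum_univ_two, Matrix.vecMul, dotProduct]
  rw [hconj]
  exact cuntzSubeq_conj _ _

theorem cuntzSubeq_diagonal_of_add [IsTopologicalSemiring R] [FirstCountableTopology R]
    {p e f c d : R} (h : CuntzSubeq p (e + f)) (he : CuntzSubeq e c) (hf : CuntzSubeq f d) :
    CuntzSubeq (Matrix.diagonal ![p, 0]) (Matrix.diagonal ![c, d]) := by
  have : FirstCountableTopology (Matrix (Fin 2) (Fin 2) R) :=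
    inferInstanceAs (FirstCountableTopology (Fin 2 → Fin 2 → R))
  have h₁ : CuntzSubeq (Matrix.diagonal ![p, 0]) (Matrix.diagonal ![e + f, 0]) :=
    CuntzSubeq.diagonal <| Fin.forall_fin_two.mpr ⟨h, cuntzSubeq_zero_left 0⟩
  have h₃ : CuntzSubeq (Matrix.diagonal ![e, f]) (Matrix.diagonal ![c, d]) :=
    CuntzSubeq.diagonal <| Fin.forall_fin_two.mpr ⟨he, hf⟩
  exact (h₁.trans (cuntzSubeq_diagonal_add e f)).trans h₃

end Matrix

section CStarAlgebra

variable {A : Type*} [CStarAlgebra A]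

theorem cuntzSubeq_of_forall_norm_sub_le {a b : A}
    (h : ∀ ε > 0, ∃ v : A, ‖a - v * b * star v‖ ≤ ε) : CuntzSubeq a b := by
  refine cuntzSubeq_iff_mem_closure.mpr (Metric.mem_closure_iff.mpr fun ε hε => ?_)
  obtain ⟨v, hv⟩ := h (ε / 2) (half_pos hε)
  exact ⟨_, mem_range_self v, by rw [dist_eq_norm]; linarith⟩

theorem cuntzSubeq_smul {r : ℝ} (hr : 0 ≤ r) (b : A) : CuntzSubeq (r • b) b := by
  have h : r • b =
      algebraMap ℝ A (Real.sqrt r) * b * star (algebraMap ℝ A (Real.sqrt r)) := by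
    rw [← algebraMap_star_comm, star_trivial, Algebra.commutes, mul_assoc, ← map_mul,
      Real.mul_self_sqrt hr, ← Algebra.commutes, Algebra.smul_def]
  rw [h]
  exact cuntzSubeq_conj _ _

theorem posCut_smul (ε : ℝ) {r : ℝ} (hr : 0 < r) {x : A} (hx : IsSelfAdjoint x) :
    posCut ε (r • x) = r • posCut (ε / r) x := by
  rw [posCut, posCut, ← cfc_comp_smul r _ x, ← cfc_smul r _ x]
  refine cfc_congr fun t _ => ?_
  simp only [smul_eq_mul]
  rw [mul_max_of_nonneg _ _ hr.le, mul_zero, mul_sub, mul_div_cancel₀ _ hr.ne']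

theorem norm_posCut_sub_posCut_add_le (σ : ℝ) {δ : ℝ} (hδ : 0 ≤ δ) (x : A) :
    ‖posCut σ x - posCut (σ + δ) x‖ ≤ δ := by
  rw [posCut, posCut, ← cfc_sub _ _ x]
  refine norm_cfc_le hδ fun t _ => ?_
  calc ‖max (t - σ) 0 - max (t - (σ + δ)) 0‖ ≤ |t - σ - (t - (σ + δ))| :=
        abs_max_sub_max_le_abs _ _ _
    _ = δ := by rw [show t - σ - (t - (σ + δ)) = δ by ring, abs_of_nonneg hδ]

theorem exists_posCut_add_eq_conj {x : A} (hx : IsSelfAdjoint x) (σ : ℝ) {δ : ℝ}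
    (hδ : 0 < δ) :
    ∃ w : A, posCut (σ + δ) x = star w * (x - algebraMap ℝ A σ) * w := by
  set f : ℝ → ℝ := fun t => Real.sqrt (max (t - (σ + δ)) 0 / max (t - σ) δ)
  have hden : ∀ t : ℝ, 0 < max (t - σ) δ := fun t => hδ.trans_le (le_max_right _ _)
  have hf : Continuous f := Real.continuous_sqrt.comp <|
    Continuous.div (by fun_prop) (by fun_prop) fun t => (hden t).ne'
  refine ⟨cfc f x, ?_⟩
  rw [(cfc_predicate f x).star_eq, ← cfc_id_sub_const hx, ← cfc_mul f _ x hf.continuousOn,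
    ← cfc_mul (fun t => f t * (t - σ)) f x (by fun_prop) hf.continuousOn, posCut]
  refine cfc_congr fun t _ => ?_
  have hff : f t * f t = max (t - (σ + δ)) 0 / max (t - σ) δ :=
    Real.mul_self_sqrt (div_nonneg (le_max_right _ _) (hden t).le)
  rw [mul_right_comm, hff]
  rcases le_or_gt δ (t - σ) with h | h
  · rw [max_eq_left h, div_mul_cancel₀ _ (hδ.trans_le h).ne']
  · rw [max_eq_right (by linarith), zero_div, zero_mul]

variable [PartialOrder A] [StarOrderedRing A]

theorem exists_isSelfAdjoint_mul_add_algebraMap_mul_eq_one {b : A} (hb : 0 ≤ b) {t : ℝ}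
    (ht : 0 < t) : ∃ k : A, IsSelfAdjoint k ∧ k * (b + algebraMap ℝ A t) * k = 1 := by
  set F : ℝ → ℝ := fun s => (Real.sqrt (max s 0 + t))⁻¹
  have hF : Continuous F := by
    refine (by fun_prop : Continuous fun s : ℝ => Real.sqrt (max s 0 + t)).inv₀ fun s => ?_
    exact (Real.sqrt_pos.mpr (by positivity)).ne'
  refine ⟨cfc F b, cfc_predicate F b, ?_⟩
  have hbt : b + algebraMap ℝ A t = cfc (fun s => s + t) b := by
    rw [cfc_add_const t (fun s => s) b, cfc_id' ℝ b]
  rw [hbt, ← cfc_mul F _ b hF.continuousOn,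
    ← cfc_mul (fun s => F s * (s + t)) F b (by fun_prop) hF.continuousOn, ← cfc_one ℝ b]
  refine cfc_congr fun s hs => ?_
  have hs0 : 0 < s + t := by linarith [spectrum_nonneg_of_nonneg hb hs]
  have hsqrt : Real.sqrt (s + t) ≠ 0 := (Real.sqrt_pos.mpr hs0).ne'
  simp only [F, max_eq_left (spectrum_nonneg_of_nonneg hb hs), Pi.one_apply]
  field_simp
  exact (Real.sq_sqrt hs0.le).symm

theorem CuntzSubeq.of_le {a b : A} (ha : 0 ≤ a) (hab : a ≤ b) : CuntzSubeq a b := by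
  refine cuntzSubeq_of_forall_norm_sub_le fun t ht => ?_
  obtain ⟨k, hk, hkbk⟩ := exists_isSelfAdjoint_mul_add_algebraMap_mul_eq_one (ha.trans hab) ht
  -- `a - v b v* = t (k a^(1/2))* (k a^(1/2))` and `k a k ≤ k (b + t) k = 1`
  set y := k * CFC.sqrt a
  refine ⟨CFC.sqrt a * k, ?_⟩
  have hsa : star (CFC.sqrt a) = CFC.sqrt a := (CFC.sqrt_nonneg a).isSelfAdjoint.star_eq
  have herr : a - CFC.sqrt a * k * b * star (CFC.sqrt a * k) = t • (star y * y) := by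
    have ha' : a = CFC.sqrt a * (k * (b + algebraMap ℝ A t) * k) * CFC.sqrt a := by
      rw [hkbk, mul_one, CFC.sqrt_mul_sqrt_self a ha]
    nth_rewrite 1 [ha']
    simp only [y, star_mul, hk.star_eq, hsa, Algebra.algebraMap_eq_smul_one, mul_add, add_mul,
      smul_mul_assoc, mul_smul_comm, mul_one, mul_assoc]
    abel
  have hy : ‖y * star y‖ ≤ 1 := by
    have hyy : y * star y = star k * a * k := by
      conv_rhs => rw [← CFC.sqrt_mul_sqrt_self a ha]
      simp only [y, star_mul, hk.star_eq, hsa, mul_assoc]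
    rw [hyy, CStarAlgebra.norm_le_one_iff_of_nonneg _ (star_left_conjugate_nonneg ha k)]
    calc star k * a * k ≤ star k * (b + algebraMap ℝ A t) * k :=
          star_left_conjugate_le_conjugate
            (hab.trans (le_add_of_nonneg_right (algebraMap_nonneg A ht.le))) k
      _ = 1 := by rw [hk.star_eq, hkbk]
  rw [herr, norm_smul, CStarRing.norm_star_mul_self, ← CStarRing.norm_self_mul_star,
    Real.norm_of_nonneg ht.le]
  exact mul_le_of_le_one_right ht.le hy

theorem posCut_nonneg (ε : ℝ) (x : A) : 0 ≤ posCut ε x :=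
  cfc_nonneg fun _ _ => le_max_right _ _

theorem sub_algebraMap_le_posCut (ε : ℝ) {x : A} (hx : IsSelfAdjoint x) :
    x - algebraMap ℝ A ε ≤ posCut ε x := by
  rw [← cfc_id_sub_const hx]
  exact cfc_mono fun _ _ => le_max_left _ _

theorem cuntzSubeq_posCut_of_sub_le {x z : A} {σ : ℝ} (hx : IsSelfAdjoint x)
    (h : x - algebraMap ℝ A σ ≤ z) : CuntzSubeq (posCut σ x) z := by
  refine cuntzSubeq_of_mem_closure (Metric.mem_closure_iff.mpr fun ε hε => ?_)
  obtain ⟨w, hw⟩ := exists_posCut_add_eq_conj hx σ (half_pos hε)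
  refine ⟨posCut (σ + ε / 2) x, ?_, ?_⟩
  · have hle : posCut (σ + ε / 2) x ≤ star w * z * w :=
      hw ▸ star_left_conjugate_le_conjugate h w
    exact (CuntzSubeq.of_le (posCut_nonneg _ _) hle).trans
      (by simpa using cuntzSubeq_conj (star w) z)
  · rw [dist_eq_norm]
    linarith [norm_posCut_sub_posCut_add_le σ (half_pos hε).le x]

theorem cuntzSubeq_posCut_of_le (σ : ℝ) {x y : A} (hx : IsSelfAdjoint x)
    (hy : IsSelfAdjoint y) (hxy : x ≤ y) : CuntzSubeq (posCut σ x) (posCut σ y) :=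
  cuntzSubeq_posCut_of_sub_le hx
    ((sub_le_sub_right hxy _).trans (sub_algebraMap_le_posCut σ hy))

theorem cuntzSubeq_posCut_star_mul_self (u : A) {ε : ℝ} (hε : 0 ≤ ε) :
    CuntzSubeq (posCut ε (star u * u)) (posCut ε (u * star u)) := by
  set F : ℝ → ℝ := fun r => max (r - ε) 0
  have hF : Continuous F := by fun_prop
  have hint : star u * cfc F (u * star u) = cfc F (star u * u) * star u := by
    simpa using mul_cfc_star_mul_self (star u) hF
  set c := star u * u
  refine cuntzSubeq_of_forall_norm_sub_le fun t ht => ?_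
  -- `v = max(c, t)^(-1/2) u*` turns `(uu* - ε)₊` into `(c - ε)₊ c max(c, t)⁻¹`, which is
  -- `t`-close to `(c - ε)₊`.
  set s : ℝ → ℝ := fun r => (Real.sqrt (max r t))⁻¹
  have hs : Continuous s :=
    (by fun_prop : Continuous fun r : ℝ => Real.sqrt (max r t)).inv₀ fun r =>
      (Real.sqrt_pos.mpr (ht.trans_le (le_max_right r t))).ne'
  refine ⟨cfc s c * star u, ?_⟩
  have hconj : cfc s c * star u * posCut ε (u * star u) * star (cfc s c * star u)
      = cfc (fun r => s r * F r * r * s r) c := by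
    rw [cfc_mul (fun r => s r * F r * r) s c (by fun_prop) hs.continuousOn,
      cfc_mul (fun r => s r * F r) (fun r => r) c (by fun_prop),
      cfc_mul s F c hs.continuousOn, cfc_id' ℝ c, star_mul, star_star,
      (cfc_predicate s c).star_eq, show posCut ε (u * star u) = cfc F (u * star u) from rfl]
    simp only [mul_assoc]
    rw [← mul_assoc (star u), hint]
    simp only [c, mul_assoc]
  rw [hconj, posCut, ← cfc_sub F _ c hF.continuousOn (by fun_prop)]
  refine norm_cfc_le ht.le fun r hr => ?_
  have hr0 : 0 ≤ r := spectrum_nonneg_of_nonneg (star_mul_self_nonneg u) hr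
  have hM : 0 < max r t := ht.trans_le (le_max_right r t)
  have hss : s r * s r = (max r t)⁻¹ := by
    simp only [s, ← mul_inv, Real.mul_self_sqrt hM.le]
  have hFr : 0 ≤ F r ∧ F r ≤ r := ⟨le_max_right _ _, max_le (by linarith) hr0⟩
  rw [show s r * F r * r * s r = F r * r * (s r * s r) by ring, hss, Real.norm_eq_abs]
  rcases le_total t r with htr | hrt
  · rw [max_eq_left htr, mul_assoc, mul_inv_cancel₀ (ht.trans_le htr).ne', mul_one, sub_self,
      abs_zero]
    exact ht.le
  · have hle : F r * r * t⁻¹ ≤ F r := by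
      rw [mul_assoc, ← div_eq_mul_inv]
      exact mul_le_of_le_one_right hFr.1 (div_le_one_of_le₀ hrt ht.le)
    have hnonneg : 0 ≤ F r * r * t⁻¹ :=
      mul_nonneg (mul_nonneg hFr.1 hr0) (inv_nonneg.mpr ht.le)
    rw [max_eq_right hrt, abs_le]
    constructor <;> linarith

theorem exists_star_mul_self_add_star_mul_self_eq {a g : A} (ha0 : 0 ≤ a) (ha1 : a ≤ 1)
    (hg0 : 0 ≤ g) (hg1 : g ≤ 1) :
    ∃ v u : A, star v * v + star u * u = a ∧ v * star v = (1 - g) * a * (1 - g) ∧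
      u * star u ≤ (2 : ℝ) • g := by
  set h := 1 - g
  have hh : star h = h := by simp only [h, star_sub, star_one, hg0.isSelfAdjoint.star_eq]
  have hhh : h * h ≤ 1 := by
    have hnorm : ‖h‖ ≤ 1 :=
      (CStarAlgebra.norm_le_one_iff_of_nonneg h (sub_nonneg.mpr hg1)).mpr (sub_le_self 1 hg0)
    calc h * h = star h * h := by rw [hh]
      _ ≤ algebraMap ℝ A (‖h‖ ^ 2) := CStarAlgebra.star_mul_le_algebraMap_norm_sq
      _ ≤ algebraMap ℝ A 1 := algebraMap_mono A (pow_le_one₀ (norm_nonneg h) hnorm)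
      _ = 1 := map_one _
  set q := CFC.sqrt (1 - h * h)
  have hq : star q = q := (CFC.sqrt_nonneg _).isSelfAdjoint.star_eq
  have hqq : q * q = 1 - h * h := CFC.sqrt_mul_sqrt_self _ (sub_nonneg.mpr hhh)
  set b := CFC.sqrt a
  have hb : star b = b := (CFC.sqrt_nonneg a).isSelfAdjoint.star_eq
  have hbb : b * b = a := CFC.sqrt_mul_sqrt_self a ha0
  refine ⟨h * b, q * b, ?_, ?_, ?_⟩
  · calc star (h * b) * (h * b) + star (q * b) * (q * b) = b * (h * h + q * q) * b := by
          simp only [star_mul, hh, hq, hb]; noncomm_ring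
      _ = a := by rw [hqq, add_sub_cancel, mul_one, hbb]
  · simp only [star_mul, hh, hb, ← hbb, mul_assoc]
  · calc q * b * star (q * b) = star q * a * q := by
          simp only [star_mul, hq, hb, ← hbb, mul_assoc]
      _ ≤ star q * 1 * q := star_left_conjugate_le_conjugate ha1 q
      _ = 1 - h * h := by rw [hq, mul_one, hqq]
      _ ≤ (2 : ℝ) • g := by
        have hsq : (2 : ℝ) • g - (1 - h * h) = star g * g := by
          simp only [h, hg0.isSelfAdjoint.star_eq, two_smul]; noncomm_ring
        exact sub_nonneg.mp (hsq ▸ star_mul_self_nonneg g)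

end CStarAlgebra

end RC

/-- Let `A` be a unital C*-algebra, let `a, g ∈ A` with `0 ≤ a ≤ 1`, `0 ≤ g ≤ 1`,
and let `ε₁, ε₂ ≥ 0`.  Then `(a - (ε₁ + ε₂))₊ ⊕ 0` is Cuntz subequivalent in `M₂(A)` to
`((1 - g) a (1 - g) - ε₁)₊ ⊕ (g - ε₂/2)₊`. -/
theorem statement3 {A : Type*} [CStarAlgebra A] [PartialOrder A] [StarOrderedRing A]
    (a g : A) (ha0 : 0 ≤ a) (ha1 : a ≤ 1) (hg0 : 0 ≤ g) (hg1 : g ≤ 1)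
    (ε₁ ε₂ : ℝ) (hε₁ : 0 ≤ ε₁) (hε₂ : 0 ≤ ε₂) :
    CuntzSubeq (Matrix.diagonal ![posCut (ε₁ + ε₂) a, 0])
      (Matrix.diagonal ![posCut ε₁ ((1 - g) * a * (1 - g)), posCut (ε₂ / 2) g]) := by
  obtain ⟨v, u, hsum, hv, hu⟩ := exists_star_mul_self_add_star_mul_self_eq ha0 ha1 hg0 hg1
  have hsplit : CuntzSubeq (posCut (ε₁ + ε₂) a)
      (posCut ε₁ (star v * v) + posCut ε₂ (star u * u)) := by
    refine cuntzSubeq_posCut_of_sub_le ha0.isSelfAdjoint ?_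
    calc a - algebraMap ℝ A (ε₁ + ε₂)
        = (star v * v - algebraMap ℝ A ε₁) + (star u * u - algebraMap ℝ A ε₂) := by
          rw [← hsum, map_add]; abel
      _ ≤ _ := add_le_add (sub_algebraMap_le_posCut ε₁ (.star_mul_self v))
          (sub_algebraMap_le_posCut ε₂ (.star_mul_self u))
  have hv' : CuntzSubeq (posCut ε₁ (star v * v)) (posCut ε₁ ((1 - g) * a * (1 - g))) :=
    hv ▸ cuntzSubeq_posCut_star_mul_self v hε₁
  have hu' : CuntzSubeq (posCut ε₂ (star u * u)) (posCut (ε₂ / 2) g) := by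
    refine (cuntzSubeq_posCut_star_mul_self u hε₂).trans
      ((cuntzSubeq_posCut_of_le ε₂ (.mul_star_self u)
        (smul_nonneg zero_le_two hg0).isSelfAdjoint hu).trans ?_)
    rw [posCut_smul ε₂ two_pos hg0.isSelfAdjoint]
    exact cuntzSubeq_smul zero_le_two _
  exact cuntzSubeq_diagonal_of_add hsplit hv' hu'
end

section
/- Let A be a C*-algebra, let a, b be positive elements of A, and let δ > 0. If a ≾_A (b − δ)₊, then there exists a sequence (w_n) in A such that ‖a − w_n b w_n*‖ → 0 and ‖w_n‖ ≤ ‖a‖^{1/2} δ^{−1/2} for every n. -/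
open Filter Topology
open scoped ENNReal

open RC

/-! With `k = f(b)` for `f(t) = √((t - δ)₊ / t)` one has `(b - δ)₊ = k b k` and
`δ k² ≤ (b - δ)₊`. So if `vₙ (b - δ)₊ vₙ* → a`, then `uₙ = vₙ k` satisfies `uₙ b uₙ* → a` and,
conjugating the inequality by `vₙ`, `δ ‖uₙ‖² ≤ ‖uₙ b uₙ*‖`. Multiplying `uₙ` by `√sₙ`, where the
scalars `sₙ = ‖a‖ / (‖a‖ + ‖uₙ b uₙ* - a‖)` tend to `1` unless `a = 0`, keeps the limit and
pushes `‖uₙ b uₙ*‖` below `‖a‖`, hence `‖uₙ‖` below `‖a‖^{1/2} δ^{-1/2}`. -/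

section Rescaling

variable {E : Type*} [SeminormedAddCommGroup E] [NormedSpace ℝ E]

lemma norm_div_smul_sub_le_and_mul_norm_le (a d : E) :
    ‖(‖a‖ / (‖a‖ + ‖d - a‖)) • d - a‖ ≤ 2 * ‖d - a‖ ∧
      ‖a‖ / (‖a‖ + ‖d - a‖) * ‖d‖ ≤ ‖a‖ := by
  set ε := ‖d - a‖
  set s := ‖a‖ / (‖a‖ + ε)
  have hd : ‖d‖ ≤ ‖a‖ + ε := norm_le_norm_add_norm_sub' d a
  have hs0 : 0 ≤ s := by positivity
  have hs1 : s ≤ 1 := div_le_one_of_le₀ (le_add_of_nonneg_right (norm_nonneg _)) (by positivity)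
  have hsr : s * (‖a‖ + ε) = ‖a‖ := by
    rcases (add_nonneg (norm_nonneg a) (norm_nonneg (d - a))).eq_or_lt with h0 | h0
    · rw [← h0, mul_zero]
      linarith [norm_nonneg a, norm_nonneg (d - a)]
    · exact div_mul_cancel₀ _ h0.ne'
  refine ⟨?_, by nlinarith⟩
  calc ‖s • d - a‖ = ‖(d - a) - (1 - s) • d‖ := by congr 1; rw [sub_smul, one_smul]; abel
    _ ≤ ε + (1 - s) * ‖d‖ := by
      refine (norm_sub_le _ _).trans_eq ?_
      rw [norm_smul, Real.norm_of_nonneg (sub_nonneg.mpr hs1)]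
    _ ≤ 2 * ε := by nlinarith

lemma exists_smul_tendsto_and_mul_norm_le {a : E} {d : ℕ → E} (hd : Tendsto d atTop (𝓝 a)) :
    ∃ s : ℕ → ℝ, (∀ n, 0 ≤ s n) ∧ Tendsto (fun n => s n • d n) atTop (𝓝 a) ∧
      ∀ n, s n * ‖d n‖ ≤ ‖a‖ := by
  refine ⟨fun n => ‖a‖ / (‖a‖ + ‖d n - a‖), fun n => by positivity, ?_,
    fun n => (norm_div_smul_sub_le_and_mul_norm_le a (d n)).2⟩
  rw [tendsto_iff_norm_sub_tendsto_zero]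
  refine squeeze_zero (fun _ => norm_nonneg _)
    (fun n => (norm_div_smul_sub_le_and_mul_norm_le a (d n)).1) ?_
  simpa using (tendsto_iff_norm_sub_tendsto_zero.mp hd).const_mul 2

end Rescaling

noncomputable def sqrtCutRatio (δ t : ℝ) : ℝ := Real.sqrt (max (t - δ) 0 / t)

lemma sqrtCutRatio_of_le {δ t : ℝ} (ht : t ≤ δ) : sqrtCutRatio δ t = 0 := by
  simp [sqrtCutRatio, max_eq_right (sub_nonpos.mpr ht)]

lemma sqrtCutRatio_mul_self_of_lt {δ t : ℝ} (hδ : 0 ≤ δ) (ht : δ < t) :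
    sqrtCutRatio δ t * sqrtCutRatio δ t = (t - δ) / t := by
  rw [sqrtCutRatio, max_eq_left (by linarith),
    Real.mul_self_sqrt (div_nonneg (by linarith) (by linarith))]

lemma continuous_sqrtCutRatio {δ : ℝ} (hδ : 0 < δ) : Continuous (sqrtCutRatio δ) := by
  refine continuous_iff_continuousAt.mpr fun t => ?_
  rcases lt_or_ge t δ with ht | ht
  · exact (continuousAt_const (y := (0 : ℝ))).congr <|
      eventually_of_mem (Iio_mem_nhds ht) fun s hs => (sqrtCutRatio_of_le (le_of_lt hs)).symm
  · exact Real.continuous_sqrt.continuousAt.comp <|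
      ContinuousAt.div (by fun_prop) continuousAt_id (hδ.trans_le ht).ne'

lemma sqrtCutRatio_mul_mul_self {δ : ℝ} (hδ : 0 ≤ δ) (t : ℝ) :
    sqrtCutRatio δ t * t * sqrtCutRatio δ t = max (t - δ) 0 := by
  rcases le_or_gt t δ with ht | ht
  · simp [sqrtCutRatio_of_le ht, max_eq_right (sub_nonpos.mpr ht)]
  · rw [mul_right_comm, sqrtCutRatio_mul_self_of_lt hδ ht, max_eq_left (by linarith),
      div_mul_cancel₀ _ (by linarith)]

lemma mul_sqrtCutRatio_mul_self_le {δ : ℝ} (hδ : 0 ≤ δ) (t : ℝ) :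
    δ * (sqrtCutRatio δ t * sqrtCutRatio δ t) ≤ max (t - δ) 0 := by
  rcases le_or_gt t δ with ht | ht
  · simp [sqrtCutRatio_of_le ht]
  · rw [sqrtCutRatio_mul_self_of_lt hδ ht, max_eq_left (by linarith), mul_div_assoc',
      div_le_iff₀ (by linarith)]
    nlinarith

section CStarAlgebra

variable {A : Type*} [NonUnitalCStarAlgebra A] [PartialOrder A] [StarOrderedRing A]

lemma exists_mul_mul_eq_posCutN {b : A} (hb : IsSelfAdjoint b) {δ : ℝ} (hδ : 0 < δ) :
    ∃ k : A, IsSelfAdjoint k ∧ k * b * k = posCutN δ b ∧ δ • (k * k) ≤ posCutN δ b := by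
  have hf := (continuous_sqrtCutRatio hδ).continuousOn (s := quasispectrum ℝ b)
  have hf0 : sqrtCutRatio δ 0 = 0 := sqrtCutRatio_of_le hδ.le
  refine ⟨cfcₙ (sqrtCutRatio δ) b, IsSelfAdjoint.cfcₙ, ?_, ?_⟩
  · rw [posCutN, ← cfcₙ_congr fun t _ => sqrtCutRatio_mul_mul_self hδ.le t,
      cfcₙ_mul (fun t => sqrtCutRatio δ t * t) _ b (hf.mul continuousOn_id) (by simp) hf hf0,
      cfcₙ_mul _ (fun t => t) b hf hf0 continuousOn_id rfl, cfcₙ_id' ℝ b]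
  · rw [← cfcₙ_mul _ _ b hf hf0 hf hf0,
      ← cfcₙ_smul δ (fun t => sqrtCutRatio δ t * sqrtCutRatio δ t) b (hf.mul hf) (by simp [hf0]),
      posCutN]
    exact cfcₙ_mono (fun t _ => mul_sqrtCutRatio_mul_self_le hδ.le t)
      (hg0 := by simp [hδ.le])

lemma mul_norm_mul_sq_le_of_smul_mul_self_le {k x : A} (hk : IsSelfAdjoint k) {δ : ℝ}
    (hδ : 0 ≤ δ) (hle : δ • (k * k) ≤ x) (v : A) :
    δ * ‖v * k‖ ^ 2 ≤ ‖v * x * star v‖ := by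
  have hconj : δ • (v * k * star (v * k)) ≤ v * x * star v := by
    simpa only [star_mul, hk.star_eq, mul_smul_comm, smul_mul_assoc, mul_assoc]
      using star_right_conjugate_le_conjugate hle v
  have := CStarAlgebra.norm_le_norm_of_nonneg_of_le
    (smul_nonneg hδ (mul_star_self_nonneg (v * k))) hconj
  rwa [norm_smul, Real.norm_of_nonneg hδ, CStarRing.norm_self_mul_star, ← sq] at this

end CStarAlgebra

theorem statement4_general {A : Type*} [NonUnitalCStarAlgebra A] [PartialOrder A] [StarOrderedRing A]
    (a b : A) (hb : 0 ≤ b) (δ : ℝ) (hδ : 0 < δ)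
    (h : CuntzSubeq a (posCutN δ b)) :
    ∃ w : ℕ → A,
      Tendsto (fun n => ‖a - w n * b * star (w n)‖) atTop (𝓝 0) ∧
        ∀ n, ‖w n‖ ≤ Real.sqrt ‖a‖ / Real.sqrt δ := by
  obtain ⟨v, hv⟩ := h
  obtain ⟨k, hk, hkbk, hkk⟩ := exists_mul_mul_eq_posCutN hb.isSelfAdjoint hδ
  obtain ⟨s, hs0, hs, hsd⟩ := exists_smul_tendsto_and_mul_norm_le hv
  have hconj (n : ℕ) : (√(s n) • (v n * k)) * b * star (√(s n) • (v n * k)) =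
      s n • (v n * posCutN δ b * star (v n)) := by
    rw [star_smul, star_trivial, smul_mul_assoc, smul_mul_assoc, mul_smul_comm, smul_smul,
      Real.mul_self_sqrt (hs0 n), ← hkbk, star_mul, hk.star_eq]
    simp only [mul_assoc]
  refine ⟨fun n => √(s n) • (v n * k), ?_, fun n => ?_⟩
  · simpa only [hconj, norm_sub_rev a] using tendsto_iff_norm_sub_tendsto_zero.mp hs
  · have hvk := mul_norm_mul_sq_le_of_smul_mul_self_le hk hδ.le hkk (v n)
    rw [norm_smul, Real.norm_of_nonneg (Real.sqrt_nonneg _), ← Real.sqrt_div (norm_nonneg a),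
      Real.le_sqrt (by positivity) (by positivity), mul_pow, Real.sq_sqrt (hs0 n),
      le_div_iff₀ hδ]
    nlinarith [hs0 n, hsd n]

/-- Let `A` be a C*-algebra, let `a, b ≥ 0` in `A` and let `δ > 0`.
If `a ≾_A (b - δ)₊`, then there is a sequence `(wₙ)` in `A` with `‖a - wₙ b wₙ*‖ → 0` and
`‖wₙ‖ ≤ ‖a‖^{1/2} δ^{-1/2}` for every `n`. -/
theorem statement4 {A : Type*} [NonUnitalCStarAlgebra A] [PartialOrder A] [StarOrderedRing A]
    (a b : A) (ha : 0 ≤ a) (hb : 0 ≤ b) (δ : ℝ) (hδ : 0 < δ)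
    (h : CuntzSubeq a (posCutN δ b)) :
    ∃ w : ℕ → A,
      Tendsto (fun n => ‖a - w n * b * star (w n)‖) atTop (𝓝 0) ∧
        ∀ n, ‖w n‖ ≤ Real.sqrt ‖a‖ / Real.sqrt δ :=
  statement4_general a b hb δ hδ h
end

section
/- Let G be a finite group, let A be a C*-algebra, let α : G → Aut(A) be an action of G on A, and let a, b be positive elements of the fixed point algebra A^α. If a lies in the closure of b A b, then a lies in the closure of b A^α b, and a ≾_{A^α} b. -/
open Filter Topology
open scoped ENNReal

open RC

/-! Averaging over `G`, `E x = |G|⁻¹ ∑_g α_g x`, is continuous, fixes `a` and maps `b c b` to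
`b (E c) b` with `E c` fixed; this gives the first claim.

For the second, let `w_ε = g_ε(b)` with `g_ε(t) = √t / (t + ε)`. Then `e_ε = w_ε b w_ε = (b/(b+ε))²`
is a contraction with `e_ε b → b`, hence `e_ε x → x` on the closure of `b A`, in particular
`e_ε a → a`. The C*-identity upgrades this to `e_ε a^{1/2} → a^{1/2}`, so the fixed elements
`v_ε = a^{1/2} w_ε` satisfy `v_ε b v_ε* = a^{1/2} e_ε a^{1/2} → a`. -/

section Average

variable {G A : Type*} [Fintype G] [NonUnitalRing A] [StarRing A] [Module ℂ A]
  (α : G → A ≃⋆ₐ[ℂ] A)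

noncomputable def average (x : A) : A := (Fintype.card G : ℂ)⁻¹ • ∑ g, α g x

theorem average_eq_self [Nonempty G] {x : A} (hx : ∀ g, α g x = x) : average α x = x := by
  have hcard : (Fintype.card G : ℂ) ≠ 0 := Nat.cast_ne_zero.mpr Fintype.card_ne_zero
  simp only [average, hx, Finset.sum_const, Finset.card_univ, ← Nat.cast_smul_eq_nsmul ℂ,
    smul_smul, inv_mul_cancel₀ hcard, one_smul]

theorem average_mem_fixedAlg [Group G] (hαmul : ∀ (g h : G) (x : A), α (g * h) x = α g (α h x))
    (x : A) : average α x ∈ fixedAlg α := fun g => by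
  simp only [average, map_smul, map_sum, ← hαmul]
  congr 1
  exact Fintype.sum_equiv (Equiv.mulLeft g) _ _ fun _ => rfl

theorem average_mul_mul [IsScalarTower ℂ A A] [SMulCommClass ℂ A A] {b : A}
    (hb : ∀ g, α g b = b) (c : A) : average α (b * c * b) = b * average α c * b := by
  simp only [average, map_mul, hb, ← Finset.mul_sum, ← Finset.sum_mul, mul_smul_comm,
    smul_mul_assoc]

end Average

theorem continuous_average {G A : Type*} [Fintype G] [NonUnitalCStarAlgebra A]
    (α : G → A ≃⋆ₐ[ℂ] A) : Continuous (average α) :=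
  (continuous_finsetSum _ fun g _ => (StarAlgEquiv.isometry (α g)).continuous).const_smul _

theorem isClosed_fixedAlg {G A : Type*} [Group G] [NonUnitalCStarAlgebra A]
    (α : G → A ≃⋆ₐ[ℂ] A) : IsClosed (fixedAlg α : Set A) := by
  show IsClosed {x : A | ∀ g, α g x = x}
  rw [Set.ofPred_forall]
  exact isClosed_iInter fun g =>
    isClosed_eq (StarAlgEquiv.isometry (α g)).continuous continuous_id

theorem mem_closure_mul_fixed_mul {G A : Type*} [Group G] [Fintype G] [NonUnitalCStarAlgebra A]
    (α : G → A ≃⋆ₐ[ℂ] A) (hαmul : ∀ (g h : G) (x : A), α (g * h) x = α g (α h x)) {a b : A}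
    (ha : ∀ g, α g a = a) (hb : ∀ g, α g b = b)
    (hab : a ∈ closure {y : A | ∃ c : A, y = b * c * b}) :
    a ∈ closure {y : A | ∃ c : A, (∀ g, α g c = c) ∧ y = b * c * b} := by
  rw [← average_eq_self α ha]
  refine map_mem_closure (continuous_average α) hab ?_
  rintro _ ⟨c, rfl⟩
  exact ⟨average α c, average_mem_fixedAlg α hαmul c, average_mul_mul α hb c⟩

/-- The absolute value keeps the denominator positive on all of `ℝ`. -/
noncomputable def sqrtDivAbsAdd (ε t : ℝ) : ℝ := √t / (|t| + ε)

section Scalar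

variable {ε t : ℝ}

theorem continuous_sqrtDivAbsAdd (hε : 0 < ε) : Continuous (sqrtDivAbsAdd ε) :=
  Real.continuous_sqrt.div (continuous_abs.add continuous_const) fun _ => by positivity

@[simp]
theorem sqrtDivAbsAdd_zero : sqrtDivAbsAdd ε 0 = 0 := by simp [sqrtDivAbsAdd]

theorem sqrtDivAbsAdd_mul_self_mul (hε : 0 < ε) (ht : 0 ≤ t) :
    sqrtDivAbsAdd ε t * t * sqrtDivAbsAdd ε t = (t / (t + ε)) ^ 2 := by
  have : t + ε ≠ 0 := by positivity
  have hs := Real.mul_self_sqrt ht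
  rw [sqrtDivAbsAdd, abs_of_nonneg ht]
  field_simp
  linear_combination t * hs

theorem div_add_sq_le_one (hε : 0 < ε) (ht : 0 ≤ t) : (t / (t + ε)) ^ 2 ≤ 1 :=
  pow_le_one₀ (by positivity) ((div_le_one (by positivity)).2 (by linarith))

theorem abs_div_add_sq_mul_sub_le (hε : 0 < ε) (ht : 0 ≤ t) :
    |(t / (t + ε)) ^ 2 * t - t| ≤ 2 * ε := by
  have hd : 0 < t + ε := by positivity
  have key : (t / (t + ε)) ^ 2 * t - t = -(ε * (t * (2 * t + ε) / (t + ε) ^ 2)) := by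
    field_simp; ring
  rw [key, abs_neg, abs_of_nonneg (by positivity)]
  have : t * (2 * t + ε) / (t + ε) ^ 2 ≤ 2 := by
    rw [div_le_iff₀ (by positivity)]; nlinarith
  nlinarith

end Scalar

theorem tendsto_mul_of_mem_closure_mul {R : Type*} [NonUnitalSeminormedRing R] {e : ℕ → R}
    {C : NNReal} {b x : R} (he : ∀ n, ‖e n‖ ≤ C) (heb : Tendsto (fun n => e n * b) atTop (𝓝 b))
    (hx : x ∈ closure {y : R | ∃ c, y = b * c}) : Tendsto (fun n => e n * x) atTop (𝓝 x) := by
  have hequi : Equicontinuous fun n (y : R) => e n * y :=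
    (LipschitzWith.uniformEquicontinuous _ C fun n => LipschitzWith.of_dist_le_mul fun y z => by
      rw [dist_eq_norm, dist_eq_norm, ← mul_sub]
      exact (norm_mul_le _ _).trans (mul_le_mul_of_nonneg_right (he n) (norm_nonneg _))
      ).equicontinuous
  refine closure_minimal ?_ (hequi.isClosed_setOfPred_tendsto continuous_id) hx
  rintro _ ⟨c, rfl⟩
  simpa only [Set.mem_ofPred_eq, id, mul_assoc] using heb.mul_const c

theorem norm_mul_sub_self_sq_le {E : Type*} [NonUnitalNormedRing E] [StarRing E] [CStarRing E]
    {h x : E} (hh : ‖h‖ ≤ 1) : ‖h * x - x‖ ^ 2 ≤ 2 * ‖h * (x * star x) - x * star x‖ := by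
  set d := h * (x * star x) - x * star x
  have hconj : (h * x - x) * star (h * x - x) = d * star h - d := by
    simp only [d, star_sub, star_mul]; noncomm_ring
  calc ‖h * x - x‖ ^ 2 = ‖d * star h - d‖ := by rw [sq, ← CStarRing.norm_self_mul_star, hconj]
    _ ≤ ‖d‖ * ‖h‖ + ‖d‖ := by
        grw [norm_sub_le, norm_mul_le, norm_star]
    _ ≤ 2 * ‖d‖ := by nlinarith [norm_nonneg d]

theorem tendsto_mul_of_tendsto_mul_self_mul_star {E : Type*} [NonUnitalNormedRing E] [StarRing E]
    [CStarRing E] {e : ℕ → E} {x : E} (he : ∀ n, ‖e n‖ ≤ 1)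
    (hx : Tendsto (fun n => e n * (x * star x)) atTop (𝓝 (x * star x))) :
    Tendsto (fun n => e n * x) atTop (𝓝 x) := by
  rw [tendsto_iff_norm_sub_tendsto_zero] at hx ⊢
  have hsqrt : Tendsto (fun n => √(2 * ‖e n * (x * star x) - x * star x‖)) atTop (𝓝 0) := by
    have h2 : Tendsto (fun n => 2 * ‖e n * (x * star x) - x * star x‖) atTop (𝓝 0) := by
      simpa using hx.const_mul 2
    simpa only [Real.sqrt_zero, Function.comp_def] using (Real.continuous_sqrt.tendsto 0).comp h2
  refine squeeze_zero (fun n => norm_nonneg _) (fun n => ?_) hsqrt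
  exact Real.le_sqrt_of_sq_le (norm_mul_sub_self_sq_le (he n))

section CStarAlgebra

variable {A : Type*} [NonUnitalCStarAlgebra A]

theorem cfcₙ_mul_mul_cfcₙ {f : ℝ → ℝ} {a : A} (ha : IsSelfAdjoint a) (hf : Continuous f)
    (hf0 : f 0 = 0) : cfcₙ f a * a * cfcₙ f a = cfcₙ (fun t => f t * t * f t) a := by
  rw [cfcₙ_mul (fun t => f t * t) f a, cfcₙ_mul f (fun t => t) a, cfcₙ_id' ℝ a]

theorem cfcₙ_mul_sub_self {f : ℝ → ℝ} {a : A} (ha : IsSelfAdjoint a) (hf : Continuous f)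
    (hf0 : f 0 = 0) : cfcₙ f a * a - a = cfcₙ (fun t => f t * t - t) a := by
  rw [cfcₙ_sub (fun t => f t * t) (fun t => t) a, cfcₙ_mul f (fun t => t) a, cfcₙ_id' ℝ a]

variable [PartialOrder A] [StarOrderedRing A] {b : A} {ε : ℝ}

theorem norm_cfcₙ_sqrtDivAbsAdd_conj_le_one (hb : 0 ≤ b) (hε : 0 < ε) :
    ‖cfcₙ (sqrtDivAbsAdd ε) b * b * cfcₙ (sqrtDivAbsAdd ε) b‖ ≤ 1 := by
  rw [cfcₙ_mul_mul_cfcₙ hb.isSelfAdjoint (continuous_sqrtDivAbsAdd hε) sqrtDivAbsAdd_zero]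
  refine norm_cfcₙ_le fun t ht => ?_
  have ht0 := quasispectrum_nonneg_of_nonneg b hb t ht
  rw [sqrtDivAbsAdd_mul_self_mul hε ht0, Real.norm_of_nonneg (by positivity)]
  exact div_add_sq_le_one hε ht0

theorem norm_cfcₙ_sqrtDivAbsAdd_conj_mul_sub_le (hb : 0 ≤ b) (hε : 0 < ε) :
    ‖cfcₙ (sqrtDivAbsAdd ε) b * b * cfcₙ (sqrtDivAbsAdd ε) b * b - b‖ ≤ 2 * ε := by
  have hg := continuous_sqrtDivAbsAdd hε
  rw [cfcₙ_mul_mul_cfcₙ hb.isSelfAdjoint hg sqrtDivAbsAdd_zero,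
    cfcₙ_mul_sub_self hb.isSelfAdjoint (by fun_prop) (by simp)]
  refine norm_cfcₙ_le fun t ht => ?_
  have ht0 := quasispectrum_nonneg_of_nonneg b hb t ht
  rw [sqrtDivAbsAdd_mul_self_mul hε ht0, Real.norm_eq_abs]
  exact abs_div_add_sq_mul_sub_le hε ht0

theorem tendsto_cfcₙ_sqrtDivAbsAdd_conj_mul (hb : 0 ≤ b) :
    Tendsto (fun n : ℕ => cfcₙ (sqrtDivAbsAdd (1 / ((n : ℝ) + 1))) b * b *
      cfcₙ (sqrtDivAbsAdd (1 / ((n : ℝ) + 1))) b * b) atTop (𝓝 b) := by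
  rw [tendsto_iff_norm_sub_tendsto_zero]
  refine squeeze_zero (fun n => norm_nonneg _)
    (fun n => norm_cfcₙ_sqrtDivAbsAdd_conj_mul_sub_le hb (by positivity)) ?_
  simpa using (tendsto_one_div_add_atTop_nhds_zero_nat (𝕜 := ℝ)).const_mul 2

theorem cuntzSubeqIn_of_mem_closure_mul {S : NonUnitalStarSubalgebra ℂ A}
    (hS : IsClosed (S : Set A)) {a : A} (ha : 0 ≤ a) (hb : 0 ≤ b) (haS : a ∈ S) (hbS : b ∈ S)
    (hab : a ∈ closure {y : A | ∃ c, y = b * c}) : CuntzSubeqIn S a b := by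
  have hsS : CFC.sqrt a ∈ S := by
    rw [CFC.sqrt_eq_real_sqrt a ha]
    exact cfcₙ_mem _ haS
  set s := CFC.sqrt a
  set w : ℕ → A := fun n => cfcₙ (sqrtDivAbsAdd (1 / ((n : ℝ) + 1))) b
  have hs : star s = s := (CFC.sqrt_nonneg a).isSelfAdjoint.star_eq
  have hss : s * s = a := CFC.sqrt_mul_sqrt_self a
  have hw : ∀ n, star (w n) = w n := fun n => IsSelfAdjoint.star_eq (cfcₙ_predicate _ b)
  have hunit : Tendsto (fun n => w n * b * w n * s) atTop (𝓝 s) := by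
    refine tendsto_mul_of_tendsto_mul_self_mul_star
      (fun n => norm_cfcₙ_sqrtDivAbsAdd_conj_le_one hb (by positivity)) ?_
    rw [hs, hss]
    exact tendsto_mul_of_mem_closure_mul (C := 1)
      (fun n => norm_cfcₙ_sqrtDivAbsAdd_conj_le_one hb (by positivity))
      (tendsto_cfcₙ_sqrtDivAbsAdd_conj_mul hb) hab
  refine ⟨fun n => s * w n, fun n => mul_mem hsS (cfcₙ_mem _ hbS), ?_⟩
  have := hunit.const_mul s
  rw [hss] at this
  simpa only [star_mul, hw, hs, mul_assoc] using this

end CStarAlgebra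

theorem statement10_general {G : Type*} [Group G] [Fintype G]
    {A : Type*} [NonUnitalCStarAlgebra A] [PartialOrder A] [StarOrderedRing A]
    (α : G → A ≃⋆ₐ[ℂ] A)
    (hαmul : ∀ (g h : G) (x : A), α (g * h) x = α g (α h x))
    (a b : A) (ha : 0 ≤ a) (hb : 0 ≤ b)
    (hafix : ∀ g, α g a = a) (hbfix : ∀ g, α g b = b)
    (hmem : a ∈ closure {y : A | ∃ c : A, y = b * c * b}) :
    a ∈ closure {y : A | ∃ c : A, (∀ g, α g c = c) ∧ y = b * c * b} ∧
      CuntzSubeqIn {y : A | ∀ g, α g y = y} a b := by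
  have hmem' : a ∈ closure {y : A | ∃ c : A, y = b * c} :=
    closure_mono (by rintro _ ⟨c, rfl⟩; exact ⟨c * b, mul_assoc b c b⟩) hmem
  exact ⟨mem_closure_mul_fixed_mul α hαmul hafix hbfix hmem,
    cuntzSubeqIn_of_mem_closure_mul (isClosed_fixedAlg α) ha hb hafix hbfix hmem'⟩

/-- Let `G` be a finite group acting on a C*-algebra `A` via `α`, and let
`a, b ≥ 0` be fixed points.  If `a ∈ cl(b A b)`, then `a ∈ cl(b A^α b)` and `a ≾_{A^α} b`. -/
theorem statement10 {G : Type*} [Group G] [Fintype G]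
    {A : Type*} [NonUnitalCStarAlgebra A] [PartialOrder A] [StarOrderedRing A]
    (α : G → A ≃⋆ₐ[ℂ] A)
    (hα1 : ∀ x : A, α 1 x = x)
    (hαmul : ∀ (g h : G) (x : A), α (g * h) x = α g (α h x))
    (a b : A) (ha : 0 ≤ a) (hb : 0 ≤ b)
    (hafix : ∀ g, α g a = a) (hbfix : ∀ g, α g b = b)
    (hmem : a ∈ closure {y : A | ∃ c : A, y = b * c * b}) :
    a ∈ closure {y : A | ∃ c : A, (∀ g, α g c = c) ∧ y = b * c * b} ∧
      CuntzSubeqIn {y : A | ∀ g, α g y = y} a b :=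
  statement10_general α hαmul a b ha hb hafix hbfix hmem
end

section
/- Let A be an infinite-dimensional simple unital C*-algebra, and let α : G → Aut(A) be an action of a finite group G on A which has the weak tracial Rokhlin property. Then for every ε > 0 and every positive b ∈ A^α with ‖b‖ = 1, there is a positive element x in the closure of b A b with ‖x‖ = 1 such that ‖x α_g(x)‖ < ε for all g ∈ G with g ≠ 1. -/
open Filter Topology
open scoped ENNReal

open RC

/-! Take the tower `f_g` for tolerance `δ`, finite set `{b}` and `x = b`. Then `z = b f₁² b` is
almost orthogonal to `α_g z = b (α_g f₁)² b ≈ b f_g² b` for `g ≠ 1`, since `f₁ f_g = 0` and `b`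
almost commutes with `f_g`. It is not small: writing `b = r²`, orthogonality of the `f_g` gives
`‖f b f‖ = ‖r f² r‖ ≤ Σ_g ‖f_g b f_g‖`, and each term is at most `‖f_g b‖ ≈ ‖f₁ b‖`, so
`1 - δ < |G| (‖f₁ b‖ + δ)` and `‖z‖ = ‖f₁ b‖²` is bounded below. Hence `x = z / ‖z‖` works
once `δ` is small against `ε / |G|⁴`. -/

theorem norm_mul_mul_self_mul_comm {A : Type*} [NonUnitalNormedRing A] [StarRing A] [CStarRing A]
    {r c : A} (hr : IsSelfAdjoint r) (hc : IsSelfAdjoint c) :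
    ‖c * (r * r) * c‖ = ‖r * (c * c) * r‖ := by
  have h₁ : c * (r * r) * c = star (r * c) * (r * c) := by
    rw [star_mul, hr.star_eq, hc.star_eq]; noncomm_ring
  have h₂ : r * (c * c) * r = (r * c) * star (r * c) := by
    rw [star_mul, hr.star_eq, hc.star_eq]; noncomm_ring
  rw [h₁, h₂, CStarRing.norm_star_mul_self, CStarRing.norm_self_mul_star]

theorem sum_mul_sum_of_pairwise_mul_eq_zero {ι R : Type*} [Fintype ι]
    [NonUnitalNonAssocSemiring R] {f : ι → R} (horth : Pairwise fun i j => f i * f j = 0) :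
    (∑ i, f i) * ∑ i, f i = ∑ i, f i * f i := by
  rw [Finset.sum_mul_sum]
  exact Finset.sum_congr rfl fun i _ =>
    Finset.sum_eq_single i (fun j _ hji => horth hji.symm) (by simp)

theorem norm_sum_mul_mul_sum_le {ι A : Type*} [Fintype ι] [CStarAlgebra A] [PartialOrder A]
    [StarOrderedRing A] {b : A} (hb : 0 ≤ b) {f : ι → A} (hf : ∀ i, IsSelfAdjoint (f i))
    (horth : Pairwise fun i j => f i * f j = 0) :
    ‖(∑ i, f i) * b * ∑ i, f i‖ ≤ ∑ i, ‖f i * b * f i‖ := by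
  set r := CFC.sqrt b
  have hr : IsSelfAdjoint r := (CFC.sqrt_nonneg b).isSelfAdjoint
  have hrr : r * r = b := CFC.sqrt_mul_sqrt_self b
  have hS : IsSelfAdjoint (∑ i, f i) := isSelfAdjoint_sum _ fun i _ => hf i
  calc ‖(∑ i, f i) * b * ∑ i, f i‖ = ‖r * ((∑ i, f i) * ∑ i, f i) * r‖ := by
        rw [← hrr, norm_mul_mul_self_mul_comm hr hS]
    _ = ‖∑ i, r * (f i * f i) * r‖ := by
        rw [sum_mul_sum_of_pairwise_mul_eq_zero horth, Finset.mul_sum, Finset.sum_mul]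
    _ ≤ ∑ i, ‖r * (f i * f i) * r‖ := norm_sum_le _ _
    _ = ∑ i, ‖f i * b * f i‖ := by
        simp only [← hrr, norm_mul_mul_self_mul_comm hr (hf _)]

theorem norm_mul_le_of_norm_map_sub_le {A : Type*} [CStarAlgebra A] (σ : A ≃⋆ₐ[ℂ] A) {b u v : A}
    {δ : ℝ} (hbσ : σ b = b) (hb : ‖b‖ ≤ 1) (huv : ‖σ u - v‖ ≤ δ) : ‖v * b‖ ≤ ‖u * b‖ + δ := by
  have hσ : ‖σ u * b‖ = ‖u * b‖ := by rw [← hbσ, ← map_mul, hbσ, StarAlgEquiv.norm_map]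
  calc ‖v * b‖ = ‖σ u * b - (σ u - v) * b‖ := by rw [← sub_mul, sub_sub_cancel]
    _ ≤ ‖σ u * b‖ + ‖σ u - v‖ * ‖b‖ := (norm_sub_le _ _).trans (by gcongr; exact norm_mul_le _ _)
    _ ≤ ‖u * b‖ + δ := by
        rw [hσ]; gcongr; nlinarith [norm_nonneg (σ u - v), norm_nonneg b]

section NormedRing

variable {R : Type*} [NormedRing R]

theorem norm_mul_self_commutator_le {b v : R} (hb : ‖b‖ ≤ 1) :
    ‖b * b * v - v * (b * b)‖ ≤ 2 * ‖b * v - v * b‖ := by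
  have h : b * b * v - v * (b * b) = b * (b * v - v * b) + (b * v - v * b) * b := by noncomm_ring
  rw [h]
  refine (norm_add_le _ _).trans ?_
  have h₁ := norm_mul_le b (b * v - v * b)
  have h₂ := norm_mul_le (b * v - v * b) b
  nlinarith [norm_nonneg b, norm_nonneg (b * v - v * b)]

theorem norm_corner_mul_corner_le {b u v w : R} {δ : ℝ} (hb : ‖b‖ ≤ 1) (hu : ‖u‖ ≤ 1)
    (hw : ‖w‖ ≤ 1) (huv : u * v = 0) (hwv : ‖w - v‖ ≤ δ) (hbv : ‖b * v - v * b‖ ≤ δ) :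
    ‖b * (u * u) * b * (b * (w * w) * b)‖ ≤ 3 * δ := by
  have hδ : 0 ≤ δ := (norm_nonneg _).trans hwv
  have hsplit : u * b * b * w = u * (b * b) * (w - v) + u * (b * b * v - v * (b * b)) := by
    rw [show u * (b * b * v - v * (b * b)) = u * (b * b * v) - u * v * (b * b) by noncomm_ring,
      huv, zero_mul, sub_zero]
    noncomm_ring
  have hmid : ‖u * b * b * w‖ ≤ 3 * δ := by
    rw [hsplit]
    refine (norm_add_le _ _).trans ?_
    have h₁ : ‖u * (b * b) * (w - v)‖ ≤ δ := by
      calc ‖u * (b * b) * (w - v)‖ ≤ ‖u‖ * (‖b‖ * ‖b‖) * ‖w - v‖ :=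
            norm_mul₃_le.trans (by gcongr; exact norm_mul_le _ _)
        _ ≤ 1 * (1 * 1) * δ := by gcongr
        _ = δ := by ring
    have h₂ : ‖u * (b * b * v - v * (b * b))‖ ≤ 2 * δ :=
      calc ‖u * (b * b * v - v * (b * b))‖ ≤ ‖u‖ * ‖b * b * v - v * (b * b)‖ := norm_mul_le _ _
        _ ≤ 1 * (2 * δ) := by
            gcongr; exact (norm_mul_self_commutator_le hb).trans (by linarith)
        _ = 2 * δ := one_mul _
    linarith
  calc ‖b * (u * u) * b * (b * (w * w) * b)‖ = ‖b * u * (u * b * b * w) * (w * b)‖ := by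
        noncomm_ring
    _ ≤ (‖b‖ * ‖u‖) * ‖u * b * b * w‖ * (‖w‖ * ‖b‖) :=
        norm_mul₃_le.trans (by gcongr <;> exact norm_mul_le _ _)
    _ ≤ (1 * 1) * (3 * δ) * (1 * 1) := by gcongr
    _ = 3 * δ := by ring

end NormedRing

theorem norm_inv_norm_smul_mul_map_lt {A : Type*} [CStarAlgebra A] (σ : A ≃⋆ₐ[ℂ] A) {z : A}
    {ε : ℝ} (h : ‖z * σ z‖ < ε * ‖z‖ ^ 2) : ‖(‖z‖⁻¹ • z) * σ (‖z‖⁻¹ • z)‖ < ε := by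
  have hz : ‖z‖ ≠ 0 := fun h0 => by
    rw [h0] at h; nlinarith [norm_nonneg (z * σ z)]
  have hσ : σ (‖z‖⁻¹ • z) = ‖z‖⁻¹ • σ z := by
    rw [← algebraMap_smul ℂ ‖z‖⁻¹ z, map_smul, algebraMap_smul]
  rw [hσ, smul_mul_smul_comm, norm_smul, Real.norm_of_nonneg (by positivity), ← mul_inv, ← sq,
    inv_mul_lt_iff₀ (by positivity), mul_comm]
  exact h

theorem three_mul_lt_mul_pow_four_of_lt {n t δ ε : ℝ} (hn : 0 < n) (hδ : 0 < δ)
    (hδn : δ ≤ 1 / (2 * (n + 1))) (hδε : δ ≤ ε / (48 * n ^ 4)) (h : 1 - δ < n * (t + δ)) :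
    3 * δ < ε * t ^ 4 := by
  rw [le_div_iff₀ (by positivity)] at hδn hδε
  have hnt : 1 < 2 * n * t := by nlinarith
  calc 3 * δ = 3 * δ * 1 := (mul_one _).symm
    _ < 3 * δ * (2 * n * t) ^ 4 := by gcongr; exact one_lt_pow₀ hnt four_ne_zero
    _ = δ * (48 * n ^ 4) * t ^ 4 := by ring
    _ ≤ ε * t ^ 4 := by gcongr

theorem statement12_general {G : Type*} [Group G] [Fintype G]
    {A : Type*} [CStarAlgebra A] [PartialOrder A] [StarOrderedRing A]
    (α : G → A ≃⋆ₐ[ℂ] A)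
    (hwtrp : WeakTracialRokhlin α)
    (ε : ℝ) (hε : 0 < ε)
    (b : A) (hb : 0 ≤ b) (hbfix : ∀ g, α g b = b) (hbnorm : ‖b‖ = 1) :
    ∃ x ∈ closure {y : A | ∃ c : A, y = b * c * b},
      0 ≤ x ∧ ‖x‖ = 1 ∧ ∀ g : G, g ≠ 1 → ‖x * α g x‖ < ε := by
  set n : ℝ := (Fintype.card G : ℝ)
  have hn : 0 < n := Nat.cast_pos.mpr Fintype.card_pos
  set δ := min (1 / (2 * (n + 1))) (ε / (48 * n ^ 4))
  have hδ : 0 < δ := lt_min (by positivity) (by positivity)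
  obtain ⟨f, hf, horth, hcomm, hequiv, -, hlarge⟩ := hwtrp δ hδ {b} b hb hbnorm
  have hfsa : ∀ g, IsSelfAdjoint (f g) := fun g => (hf g).1.isSelfAdjoint
  have hequiv₁ : ∀ g, ‖α g (f 1) - f g‖ ≤ δ := fun g => by simpa using (hequiv g 1).le
  have hcomm_b : ∀ g, ‖b * f g - f g * b‖ ≤ δ := fun g =>
    (hcomm g b (Finset.mem_singleton_self b)).le
  have hlower : 1 - δ < n * (‖f 1 * b‖ + δ) :=
    calc 1 - δ < ‖(∑ g, f g) * b * ∑ g, f g‖ := hlarge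
      _ ≤ ∑ g, ‖f g * b * f g‖ := norm_sum_mul_mul_sum_le hb hfsa fun g h => horth g h
      _ ≤ ∑ _g : G, (‖f 1 * b‖ + δ) := Finset.sum_le_sum fun g _ =>
          (norm_mul_le _ _).trans <| (mul_le_of_le_one_right (norm_nonneg _) (hf g).2).trans <|
            norm_mul_le_of_norm_map_sub_le (α g) (hbfix g) hbnorm.le (hequiv₁ g)
      _ = n * (‖f 1 * b‖ + δ) := by rw [Finset.sum_const, Finset.card_univ, nsmul_eq_mul]
  set z := b * (f 1 * f 1) * b
  have hz_eq : z = star (f 1 * b) * (f 1 * b) := by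
    rw [star_mul, hb.isSelfAdjoint.star_eq, (hfsa 1).star_eq, ← mul_assoc, mul_assoc b]
  have hz_norm : ‖z‖ ^ 2 = ‖f 1 * b‖ ^ 4 := by
    rw [hz_eq, CStarRing.norm_star_mul_self]; ring
  have hsmall : 3 * δ < ε * ‖z‖ ^ 2 :=
    hz_norm ▸ three_mul_lt_mul_pow_four_of_lt hn hδ (min_le_left _ _) (min_le_right _ _) hlower
  have hz : ‖z‖ ≠ 0 := fun h0 => by rw [h0] at hsmall; nlinarith
  refine ⟨‖z‖⁻¹ • z, subset_closure ⟨‖z‖⁻¹ • (f 1 * f 1), by rw [mul_smul_comm, smul_mul_assoc]⟩,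
    smul_nonneg (inv_nonneg.2 (norm_nonneg _)) (hz_eq ▸ star_mul_self_nonneg _), ?_,
    fun g hg => norm_inv_norm_smul_mul_map_lt (α g) ?_⟩
  · rw [norm_smul, Real.norm_of_nonneg (inv_nonneg.2 (norm_nonneg _)), inv_mul_cancel₀ hz]
  · have hαz : α g z = b * (α g (f 1) * α g (f 1)) * b := by simp only [z, map_mul, hbfix]
    rw [hαz]
    refine (norm_corner_mul_corner_le hbnorm.le (hf 1).2 ?_ (horth 1 g (Ne.symm hg))
      (hequiv₁ g) (hcomm_b g)).trans_lt hsmall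
    rw [StarAlgEquiv.norm_map]; exact (hf 1).2

/-- Let `A` be an infinite-dimensional simple unital C*-algebra and `α` an action
of a finite group `G` on `A` with the weak tracial Rokhlin property.  Then for every `ε > 0`
and every positive `b ∈ A^α` with `‖b‖ = 1`, there is a positive `x ∈ cl(b A b)` with `‖x‖ = 1`
such that `‖x α_g(x)‖ < ε` for all `g ≠ 1`. -/
theorem statement12 {G : Type*} [Group G] [Fintype G]
    {A : Type*} [CStarAlgebra A] [PartialOrder A] [StarOrderedRing A]
    (hdim : ¬ FiniteDimensional ℂ A) (hsimple : CStarSimple A)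
    (α : G → A ≃⋆ₐ[ℂ] A)
    (hα1 : ∀ x : A, α 1 x = x)
    (hαmul : ∀ (g h : G) (x : A), α (g * h) x = α g (α h x))
    (hwtrp : WeakTracialRokhlin α)
    (ε : ℝ) (hε : 0 < ε)
    (b : A) (hb : 0 ≤ b) (hbfix : ∀ g, α g b = b) (hbnorm : ‖b‖ = 1) :
    ∃ x ∈ closure {y : A | ∃ c : A, y = b * c * b},
      0 ≤ x ∧ ‖x‖ = 1 ∧ ∀ g : G, g ≠ 1 → ‖x * α g x‖ < ε :=
  statement12_general α hwtrp ε hε b hb hbfix hbnorm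
end

section
/- Let G be a finite group, let A be a stably finite unital C*-algebra, and let α : G → Aut(A) be an action of G on A which has the Rokhlin property. Then rc(A^α) ≤ rc(A), i.e., the radius of comparison of the fixed point algebra is at most the radius of comparison of A. -/
open Filter Topology
open scoped ENNReal

open RC

/-!
Restricting a quasitrace of `A` to the closed subalgebra `A^α` gives a quasitrace of `A^α`, so
the hypothesis of `r`-comparison for positive `a, b ∈ Mₘ(A^α)` implies the hypothesis in `A`,
and `r`-comparison of `A` gives `a ≾ b` in `Mₘ(A)`. The Rokhlin property moves the implementing
elements into `Mₘ(A^α)` (Gardella–Santiago): if `v b v* ≈ a` and the Rokhlin projections `e_g`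
almost commute with all `α_g(v) b` and `α_g(v)*`, then `W = ∑_g e_g α_g(v)` satisfies
`W b W* ≈ ∑_g e_g α_g(v b v*) ≈ a` and is almost invariant, so its average `u` over `G` is
invariant with `u b u* ≈ a`. This is run in the C*-algebra `Mₘ(A)` (Mathlib's `CStarMatrix`),
where the entrywise action again has the Rokhlin property, with towers `diag(e_g)`.
-/

namespace RC

section Rokhlin

variable {G B : Type*} [Group G] [Fintype G] [NormedRing B] [StarRing B] [Module ℂ B]

structure IsRokhlinTower (β : G → B ≃⋆ₐ[ℂ] B) (F : Finset B) (η : ℝ) (e : G → B) : Prop where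
  idem : ∀ g, e g * e g = e g
  star_eq : ∀ g, star (e g) = e g
  orthogonal : ∀ g h, g ≠ h → e g * e h = 0
  sum_eq_one : ∑ g, e g = 1
  map_sub_lt : ∀ g h, ‖β g (e h) - e (g * h)‖ < η
  commutator_lt : ∀ g, ∀ x ∈ F, ‖e g * x - x * e g‖ < η

theorem rokhlinProperty_iff (β : G → B ≃⋆ₐ[ℂ] B) :
    RokhlinProperty β ↔ ∀ η, 0 < η → ∀ F, ∃ e, IsRokhlinTower β F η e := by
  refine forall₂_congr fun η _ => forall_congr' fun F => exists_congr fun e => ?_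
  exact ⟨fun ⟨hp, ho, hs, hm, hc⟩ => ⟨fun g => (hp g).1, fun g => (hp g).2, ho, hs, hm, hc⟩,
    fun ⟨hi, hst, ho, hs, hm, hc⟩ => ⟨fun g => ⟨hi g, hst g⟩, ho, hs, hm, hc⟩⟩

end Rokhlin

section ConjPerturbation

variable {R : Type*} [NonUnitalNormedRing R] [StarRing R] [NormedStarGroup R]

theorem norm_conj_sub_conj_le (u w b : R) :
    ‖u * b * star u - w * b * star w‖ ≤ ‖u - w‖ * ‖b‖ * (‖u‖ + ‖w‖) := by
  have hsplit : u * b * star u - w * b * star w = (u - w) * b * star u + w * b * star (u - w) := by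
    rw [star_sub]; noncomm_ring
  rw [hsplit]
  calc _ ≤ ‖(u - w) * b * star u‖ + ‖w * b * star (u - w)‖ := norm_add_le _ _
    _ ≤ ‖u - w‖ * ‖b‖ * ‖u‖ + ‖w‖ * ‖b‖ * ‖u - w‖ := by
      gcongr <;> refine norm_mul₃_le.trans (le_of_eq ?_) <;> rw [norm_star]
    _ = _ := by ring

end ConjPerturbation

section Averaging

variable {G B : Type*} [Group G] [Fintype G] [CStarAlgebra B] (β : G → B ≃⋆ₐ[ℂ] B)

noncomputable def average (x : B) : B := (Fintype.card G : ℂ)⁻¹ • ∑ k, β k x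

theorem average_mem_fixedAlg (hβ : ∀ g h x, β (g * h) x = β g (β h x)) (x : B) :
    average β x ∈ fixedAlg β := by
  intro g
  simp only [average, map_smul, map_sum, ← hβ]
  congr 1
  exact Fintype.sum_equiv (Equiv.mulLeft g) _ _ fun _ => rfl

theorem norm_average_le (x : B) : ‖average β x‖ ≤ ‖x‖ := by
  have hN : (0 : ℝ) < Fintype.card G := by exact_mod_cast Fintype.card_pos
  calc ‖average β x‖ ≤ (Fintype.card G : ℝ)⁻¹ * ∑ k, ‖β k x‖ := by
        rw [average, norm_smul, norm_inv, Complex.norm_natCast]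
        gcongr
        exact norm_sum_le _ _
    _ = ‖x‖ := by
        simp only [StarAlgEquiv.norm_map, Finset.sum_const, Finset.card_univ, nsmul_eq_mul]
        field_simp

theorem norm_average_sub_le {x : B} {c : ℝ} (h : ∀ k, ‖β k x - x‖ ≤ c) :
    ‖average β x - x‖ ≤ c := by
  have hN : (0 : ℝ) < Fintype.card G := by exact_mod_cast Fintype.card_pos
  have hx : average β x - x = (Fintype.card G : ℂ)⁻¹ • ∑ k, (β k x - x) := by
    rw [average, Finset.sum_sub_distrib, smul_sub, Finset.sum_const, Finset.card_univ,
      ← Nat.cast_smul_eq_nsmul ℂ, smul_smul, inv_mul_cancel₀ (by exact_mod_cast hN.ne'), one_smul]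
  calc ‖average β x - x‖ ≤ (Fintype.card G : ℝ)⁻¹ * ∑ k, ‖β k x - x‖ := by
        rw [hx, norm_smul, norm_inv, Complex.norm_natCast]
        gcongr
        exact norm_sum_le _ _
    _ ≤ (Fintype.card G : ℝ)⁻¹ * ∑ _k : G, c := by gcongr with k; exact h k
    _ = c := by
        simp only [Finset.sum_const, Finset.card_univ, nsmul_eq_mul]
        field_simp

noncomputable def towerSum (e : G → B) (v : B) : B := ∑ g, e g * β g v

variable {β} {F : Finset B} {η : ℝ} {e : G → B}

theorem IsRokhlinTower.norm_mul_le (he : IsRokhlinTower β F η e) (g : G) (x : B) :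
    ‖e g * x‖ ≤ ‖x‖ :=
  (_root_.norm_mul_le _ _).trans <|
    mul_le_of_le_one_left (norm_nonneg _) (IsStarProjection.norm_le (e g) ⟨he.idem g, he.star_eq g⟩)

theorem norm_towerSum_le (he : IsRokhlinTower β F η e) (v : B) :
    ‖towerSum β e v‖ ≤ Fintype.card G * ‖v‖ := by
  calc ‖towerSum β e v‖ ≤ ∑ g, ‖e g * β g v‖ := norm_sum_le _ _
    _ ≤ ∑ _g : G, ‖v‖ := by
        gcongr with g
        exact (he.norm_mul_le g _).trans_eq (StarAlgEquiv.norm_map _ _)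
    _ = Fintype.card G * ‖v‖ := by simp

theorem norm_map_towerSum_sub_le (hβ : ∀ g h x, β (g * h) x = β g (β h x))
    (he : IsRokhlinTower β F η e) (v : B) (k : G) :
    ‖β k (towerSum β e v) - towerSum β e v‖ ≤ Fintype.card G * (η * ‖v‖) := by
  have hreindex : towerSum β e v = ∑ g, e (k * g) * β (k * g) v :=
    (Fintype.sum_equiv (Equiv.mulLeft k) _ _ fun _ => rfl).symm
  have hdiff : β k (towerSum β e v) - towerSum β e v =
      ∑ g, (β k (e g) - e (k * g)) * β (k * g) v := by
    nth_rewrite 2 [hreindex]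
    simp only [towerSum, map_sum, map_mul, ← hβ, ← Finset.sum_sub_distrib, sub_mul]
  calc _ ≤ ∑ g, ‖(β k (e g) - e (k * g)) * β (k * g) v‖ := hdiff ▸ norm_sum_le _ _
    _ ≤ ∑ _g : G, η * ‖v‖ := by
        gcongr with g
        refine (norm_mul_le _ _).trans ?_
        rw [StarAlgEquiv.norm_map]
        exact mul_le_mul_of_nonneg_right (he.map_sub_lt k g).le (norm_nonneg _)
    _ = _ := by simp

/-- With `x_g = β_g(v) b` and `y_h = β_h(v)*`, the term `e_g x_g y_h e_h` of `W b W*` differs from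
`e_g e_h x_g y_h` by commutators with `e_h`, and the latter vanishes unless `g = h`. -/
theorem towerSum_conj_sub_eq (he : IsRokhlinTower β F η e) {a b : B} (ha : a ∈ fixedAlg β)
    (hb : b ∈ fixedAlg β) (v : B) :
    towerSum β e v * b * star (towerSum β e v) - a =
      ∑ g, e g * β g (v * b * star v - a) -
        ∑ g, ∑ h, (e g * (β g v * b) * (e h * star (β h v) - star (β h v) * e h) +
          e g * (e h * (β g v * b) - β g v * b * e h) * star (β h v)) := by
  have hconj : towerSum β e v * b * star (towerSum β e v) =
      ∑ g, ∑ h, e g * (β g v * b) * (star (β h v) * e h) := by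
    simp only [towerSum, star_sum, star_mul, he.star_eq, Finset.sum_mul, Finset.mul_sum,
      mul_assoc]
    exact Finset.sum_comm
  have hdiag : ∀ g, ∑ h, e g * e h * (β g v * b * star (β h v)) =
      e g * β g (v * b * star v) := by
    intro g
    rw [Finset.sum_eq_single_of_mem g (Finset.mem_univ g)
      fun h _ hne => by rw [he.orthogonal g h (Ne.symm hne), zero_mul], he.idem,
      map_mul, map_mul, map_star, hb g]
  have hfixed : ∀ g, e g * β g (v * b * star v - a) = e g * β g (v * b * star v) - e g * a :=
    fun g => by rw [map_sub, ha g, mul_sub]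
  have hsplit : ∀ g h, e g * (β g v * b) * (star (β h v) * e h) =
      e g * e h * (β g v * b * star (β h v)) -
        (e g * (β g v * b) * (e h * star (β h v) - star (β h v) * e h) +
          e g * (e h * (β g v * b) - β g v * b * e h) * star (β h v)) := fun g h => by
    noncomm_ring
  simp only [hconj, hsplit, Finset.sum_sub_distrib, hdiag, hfixed]
  rw [← Finset.sum_mul, he.sum_eq_one, one_mul]
  abel

theorem norm_towerSum_conj_sub_le (he : IsRokhlinTower β F η e) {a b v : B}
    (ha : a ∈ fixedAlg β) (hb : b ∈ fixedAlg β) (hF : ∀ g, β g v * b ∈ F ∧ star (β g v) ∈ F) :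
    ‖towerSum β e v * b * star (towerSum β e v) - a‖ ≤
      Fintype.card G * ‖v * b * star v - a‖ +
        Fintype.card G ^ 2 * (η * (‖v‖ * ‖b‖ + ‖v‖)) := by
  have hcomm : ∀ g h, ‖e g * (β g v * b) * (e h * star (β h v) - star (β h v) * e h) +
      e g * (e h * (β g v * b) - β g v * b * e h) * star (β h v)‖ ≤
        η * (‖v‖ * ‖b‖ + ‖v‖) := by
    intro g h
    have hx : ‖β g v * b‖ ≤ ‖v‖ * ‖b‖ := (norm_mul_le _ _).trans_eq (by rw [StarAlgEquiv.norm_map])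
    have hη : 0 ≤ η := (norm_nonneg _).trans (he.commutator_lt h _ (hF g).1).le
    refine (norm_add_le _ _).trans ?_
    rw [mul_assoc (e g), mul_assoc (e g)]
    calc _ ≤ ‖β g v * b‖ * η + η * ‖star (β h v)‖ := by
          gcongr
          · exact (he.norm_mul_le g _).trans
              ((norm_mul_le _ _).trans (by gcongr; exact (he.commutator_lt h _ (hF h).2).le))
          · exact (he.norm_mul_le g _).trans
              ((norm_mul_le _ _).trans (by gcongr; exact (he.commutator_lt h _ (hF g).1).le))
      _ ≤ ‖v‖ * ‖b‖ * η + η * ‖v‖ := by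
          rw [norm_star, StarAlgEquiv.norm_map]; gcongr
      _ = η * (‖v‖ * ‖b‖ + ‖v‖) := by ring
  rw [towerSum_conj_sub_eq he ha hb]
  calc _ ≤ ∑ g, ‖e g * β g (v * b * star v - a)‖ + ∑ g, ∑ h, η * (‖v‖ * ‖b‖ + ‖v‖) := by
        refine (norm_sub_le _ _).trans (add_le_add (norm_sum_le _ _) ?_)
        refine (norm_sum_le _ _).trans (Finset.sum_le_sum fun g _ => ?_)
        exact (norm_sum_le _ _).trans (Finset.sum_le_sum fun h _ => hcomm g h)
    _ ≤ ∑ _g : G, ‖v * b * star v - a‖ + ∑ _g : G, ∑ _h : G, η * (‖v‖ * ‖b‖ + ‖v‖) := by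
        gcongr with g
        exact (he.norm_mul_le g _).trans_eq (StarAlgEquiv.norm_map _ _)
    _ = _ := by simp; ring

theorem exists_mem_fixedAlg_norm_conj_sub_le (hβ : ∀ g h x, β (g * h) x = β g (β h x))
    (hrok : RokhlinProperty β) {a b : B} (ha : a ∈ fixedAlg β) (hb : b ∈ fixedAlg β) (v : B)
    {δ : ℝ} (hδ : 0 < δ) :
    ∃ u ∈ fixedAlg β, ‖u * b * star u - a‖ ≤ Fintype.card G * ‖v * b * star v - a‖ + δ := by
  classical
  set N : ℝ := (Fintype.card G : ℝ)
  set K : ℝ := N ^ 2 * (2 * ‖v‖ ^ 2 * ‖b‖ + ‖v‖ * ‖b‖ + ‖v‖)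
  have hK : 0 ≤ K := by positivity
  -- with tolerance `η`, all Rokhlin errors together contribute at most `η * K`
  set η : ℝ := δ / (K + 1)
  have hη : 0 < η := by positivity
  have hηK : η * K ≤ δ := by
    rw [div_mul_eq_mul_div, div_le_iff₀ (by positivity)]
    nlinarith
  set F : Finset B :=
    Finset.univ.image (fun g => β g v * b) ∪ Finset.univ.image (fun g => star (β g v))
  have hF : ∀ g, β g v * b ∈ F ∧ star (β g v) ∈ F := fun g =>
    ⟨Finset.mem_union_left _ (Finset.mem_image_of_mem _ (Finset.mem_univ g)),
      Finset.mem_union_right _ (Finset.mem_image_of_mem _ (Finset.mem_univ g))⟩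
  obtain ⟨e, he⟩ := (rokhlinProperty_iff β).1 hrok η hη F
  set W := towerSum β e v
  refine ⟨average β W, average_mem_fixedAlg β hβ W, ?_⟩
  have hW : ‖W‖ ≤ N * ‖v‖ := norm_towerSum_le he v
  have hu : ‖average β W‖ ≤ N * ‖v‖ := (norm_average_le β W).trans hW
  have huW : ‖average β W - W‖ ≤ N * (η * ‖v‖) :=
    norm_average_sub_le β (norm_map_towerSum_sub_le hβ he v)
  calc _ ≤ ‖average β W * b * star (average β W) - W * b * star W‖ + ‖W * b * star W - a‖ :=
        norm_sub_le_norm_sub_add_norm_sub _ _ _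
    _ ≤ N * (η * ‖v‖) * ‖b‖ * (N * ‖v‖ + N * ‖v‖) +
          (N * ‖v * b * star v - a‖ + N ^ 2 * (η * (‖v‖ * ‖b‖ + ‖v‖))) := by
        refine add_le_add ((norm_conj_sub_conj_le _ _ _).trans ?_)
          (norm_towerSum_conj_sub_le he ha hb hF)
        gcongr
    _ = N * ‖v * b * star v - a‖ + η * K := by ring
    _ ≤ N * ‖v * b * star v - a‖ + δ := by gcongr

theorem CuntzSubeq.cuntzSubeqIn_fixedAlg (hβ : ∀ g h x, β (g * h) x = β g (β h x))
    (hrok : RokhlinProperty β) {a b : B} (ha : a ∈ fixedAlg β) (hb : b ∈ fixedAlg β)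
    (h : CuntzSubeq a b) : CuntzSubeqIn (fixedAlg β : Set B) a b := by
  obtain ⟨v, hv⟩ := h
  choose u hu hbound using fun n : ℕ =>
    exists_mem_fixedAlg_norm_conj_sub_le hβ hrok ha hb (v n) (Nat.one_div_pos_of_nat (n := n))
  refine ⟨u, hu, tendsto_iff_norm_sub_tendsto_zero.2
    (squeeze_zero (fun _ => norm_nonneg _) hbound ?_)⟩
  simpa using ((tendsto_iff_norm_sub_tendsto_zero.1 hv).const_mul (Fintype.card G : ℝ)).add
    tendsto_one_div_add_atTop_nhds_zero_nat

end Averaging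

section CStarMatrix

variable {n A : Type*} [Fintype n] [CStarAlgebra A]

def _root_.StarAlgEquiv.mapCStarMatrix (f : A ≃⋆ₐ[ℂ] A) :
    CStarMatrix n n A ≃⋆ₐ[ℂ] CStarMatrix n n A where
  toFun M := M.map f
  invFun M := M.map f.symm
  left_inv M := by ext i j; simp [CStarMatrix.map_apply]
  right_inv M := by ext i j; simp [CStarMatrix.map_apply]
  map_mul' M N := by ext i j; simp [CStarMatrix.map_apply, CStarMatrix.mul_apply, map_sum]
  map_add' M N := by ext i j; simp [CStarMatrix.map_apply]
  map_star' M := by ext i j; simp [CStarMatrix.map_apply, CStarMatrix.star_apply, map_star]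
  map_smul' c M := by ext i j; simp [CStarMatrix.map_apply]

@[simp] theorem _root_.StarAlgEquiv.mapCStarMatrix_apply (f : A ≃⋆ₐ[ℂ] A) (M : CStarMatrix n n A)
    (i j : n) : f.mapCStarMatrix M i j = f (M i j) := rfl

section Scalar

variable [DecidableEq n]

variable (n) in
def _root_.CStarMatrix.scalar : A →+* CStarMatrix n n A :=
  CStarMatrix.ofMatrixRingEquiv.toRingHom.comp (Matrix.scalar n)

theorem _root_.CStarMatrix.scalar_apply (x : A) (i j : n) :
    CStarMatrix.scalar n x i j = if i = j then x else 0 := rfl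

theorem _root_.CStarMatrix.star_scalar (x : A) :
    star (CStarMatrix.scalar n x) = CStarMatrix.scalar n (star x) := by
  ext i j
  simp only [CStarMatrix.star_apply, CStarMatrix.scalar_apply, eq_comm (a := j)]
  split_ifs <;> simp

theorem _root_.StarAlgEquiv.mapCStarMatrix_scalar (f : A ≃⋆ₐ[ℂ] A) (x : A) :
    f.mapCStarMatrix (CStarMatrix.scalar n x) = CStarMatrix.scalar n (f x) := by
  ext i j
  simp only [StarAlgEquiv.mapCStarMatrix_apply, CStarMatrix.scalar_apply]
  split_ifs <;> simp

theorem _root_.CStarMatrix.scalar_mul_sub_mul_scalar_apply (x : A) (M : CStarMatrix n n A)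
    (i j : n) : (CStarMatrix.scalar n x * M - M * CStarMatrix.scalar n x) i j =
      x * M i j - M i j * x := by
  simp [CStarMatrix.mul_apply, CStarMatrix.scalar_apply]

end Scalar

variable [PartialOrder A] [StarOrderedRing A]

theorem _root_.CStarMatrix.norm_le_sum_norm_apply (M : CStarMatrix n n A) :
    ‖M‖ ≤ ∑ i, ∑ j, ‖M i j‖ := by
  rw [CStarMatrix.norm_def]
  refine (CStarMatrix.toCLM M).opNorm_le_bound (by positivity) fun v => ?_
  simp only [CStarMatrix.toCLM_apply_eq_sum, Finset.sum_mul]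
  refine (WithCStarModule.pi_norm_le_sum_norm _).trans ?_
  rw [Finset.sum_comm]
  gcongr with j _
  refine (norm_sum_le _ _).trans ?_
  gcongr with i _
  refine (norm_mul_le _ _).trans ?_
  rw [mul_comm]
  gcongr
  exact WithCStarModule.norm_apply_le_norm v i

variable [DecidableEq n]

theorem _root_.CStarMatrix.norm_scalar_le (x : A) :
    ‖CStarMatrix.scalar n x‖ ≤ Fintype.card n * ‖x‖ := by
  refine (CStarMatrix.norm_le_sum_norm_apply _).trans_eq ?_
  simp [CStarMatrix.scalar_apply, apply_ite]

variable {G : Type*} [Group G] [Fintype G]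

theorem rokhlinProperty_mapCStarMatrix {α : G → A ≃⋆ₐ[ℂ] A} (hrok : RokhlinProperty α) :
    RokhlinProperty fun g => (α g).mapCStarMatrix (n := n) := by
  classical
  rw [rokhlinProperty_iff] at hrok ⊢
  intro ε hε F
  set k : ℝ := (Fintype.card n : ℝ)
  set η : ℝ := ε / (k ^ 2 + 1)
  have hη : 0 < η := by positivity
  have hkη : k * η < ε ∧ k ^ 2 * η < ε := by
    have hε' : (k ^ 2 + 1) * η = ε := mul_div_cancel₀ ε (by positivity)
    constructor <;> nlinarith [sq_nonneg (k - 1)]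
  obtain ⟨e, he⟩ := hrok η hη (F.biUnion fun M => Finset.univ.image fun p : n × n => M p.1 p.2)
  refine ⟨fun g => CStarMatrix.scalar n (e g), fun g => by rw [← map_mul, he.idem],
    fun g => by rw [CStarMatrix.star_scalar, he.star_eq], fun g h hgh => ?_, ?_, fun g h => ?_,
    fun g M hM => ?_⟩
  · rw [← map_mul, he.orthogonal g h hgh, map_zero]
  · rw [← map_sum, he.sum_eq_one, map_one]
  · rw [StarAlgEquiv.mapCStarMatrix_scalar, ← map_sub]
    refine (CStarMatrix.norm_scalar_le _).trans_lt (lt_of_le_of_lt ?_ hkη.1)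
    gcongr
    exact (he.map_sub_lt g h).le
  · refine (CStarMatrix.norm_le_sum_norm_apply _).trans_lt (lt_of_le_of_lt ?_ hkη.2)
    have hentry : ∀ i j, ‖e g * M i j - M i j * e g‖ ≤ η := fun i j =>
      (he.commutator_lt g _ (Finset.mem_biUnion.2 ⟨M, hM, Finset.mem_image_of_mem _
        (Finset.mem_univ (i, j))⟩)).le
    calc _ ≤ ∑ _i : n, ∑ _j : n, η := by
          gcongr with i _ j _
          rw [CStarMatrix.scalar_mul_sub_mul_scalar_apply]
          exact hentry i j
      _ = k ^ 2 * η := by simp [k]; ring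

end CStarMatrix

section Transfer

variable {M N : Type*} [NonUnitalRing M] [StarRing M] [Module ℂ M]
  [NonUnitalRing N] [StarRing N] [Module ℂ N]

def _root_.NonUnitalStarAlgHom.mapMatrix {n : Type*} [Fintype n] (φ : M →⋆ₙₐ[ℂ] N) :
    Matrix n n M →⋆ₙₐ[ℂ] Matrix n n N where
  toFun X := X.map φ
  map_smul' c X := by ext i j; simp
  map_zero' := by ext i j; simp
  map_add' X Y := by ext i j; simp
  map_mul' X Y := by ext i j; simp [Matrix.mul_apply]
  map_star' X := by ext i j; simp [Matrix.star_apply, map_star]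

theorem _root_.NonUnitalStarAlgHom.mapMatrix_apply {n : Type*} [Fintype n] (φ : M →⋆ₙₐ[ℂ] N)
    (X : Matrix n n M) : φ.mapMatrix X = X.map φ := rfl

theorem StarPos.map (φ : M →⋆ₙₐ[ℂ] N) {a : M} (h : StarPos a) : StarPos (φ a) := by
  obtain ⟨c, rfl⟩ := h
  exact ⟨φ c, by rw [map_mul, map_star]⟩

theorem map_mulPow (φ : M →⋆ₙₐ[ℂ] N) (x : M) (k : ℕ) : φ (mulPow x k) = mulPow (φ x) k := by
  induction k with
  | zero => rfl
  | succ k ih => exact (map_mul φ _ _).trans (congrArg (· * φ x) ih)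

theorem HasDTau.comp (φ : M →⋆ₙₐ[ℂ] N) {σ : N → ℂ} {a : M} {d : ℝ}
    (h : HasDTau σ (φ a) d) : HasDTau (fun x => σ (φ x)) a d := fun c hc =>
  h (fun k => φ (c k)) fun k => ⟨(hc k).1.map φ, by rw [← map_mulPow, (hc k).2]⟩

theorem CuntzSubeqIn.cuntzSubeq_of_isInducing [TopologicalSpace M] [TopologicalSpace N]
    (φ : M →⋆ₙₐ[ℂ] N) (hφ : Topology.IsInducing φ) {a b : M}
    (h : CuntzSubeqIn (Set.range φ) (φ a) (φ b)) : CuntzSubeq a b := by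
  obtain ⟨w, hw, hlim⟩ := h
  choose v hv using hw
  refine ⟨v, hφ.tendsto_nhds_iff.2 ?_⟩
  simpa only [Function.comp_def, map_mul, map_star, hv] using hlim

variable [TopologicalSpace M] [TopologicalSpace N]

theorem IsQuasitracePre.comp {τ : N → ℂ} (h : IsQuasitracePre τ) (φ : M →⋆ₙₐ[ℂ] N)
    (hφ : Topology.IsClosedEmbedding φ) : IsQuasitracePre (fun x => τ (φ x)) := by
  obtain ⟨h_comm, h_nonneg, h_re_im, h_lin⟩ := h
  refine ⟨fun x => ?_, fun x => ?_, fun a b ha hb => ?_, fun B hB hcomm => ?_⟩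
  · simpa only [map_mul, map_star] using h_comm (φ x)
  · simpa only [map_mul, map_star] using h_nonneg (φ x)
  · simpa only [map_add, map_smul] using h_re_im (φ a) (φ b) (ha.map φ) (hb.map φ)
  · have hB' : IsClosed (B.map φ : Set N) := by
      rw [NonUnitalStarSubalgebra.coe_map]
      exact hφ.isClosedMap _ hB
    have hcomm' : ∀ x ∈ B.map φ, ∀ y ∈ B.map φ, x * y = y * x := by
      rintro _ ⟨x, hx, rfl⟩ _ ⟨y, hy, rfl⟩
      rw [← map_mul, ← map_mul, hcomm x hx y hy]
    obtain ⟨hadd, hsmul⟩ := h_lin _ hB' hcomm'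
    refine ⟨fun x hx y hy => ?_, fun c x hx => ?_⟩
    · simpa only [map_add] using hadd (φ x) ⟨x, hx, rfl⟩ (φ y) ⟨y, hy, rfl⟩
    · simpa only [map_smul] using hsmul c (φ x) ⟨x, hx, rfl⟩

theorem IsQuasitrace.comp {τ : N → ℂ} (h : IsQuasitrace τ) (φ : M →⋆ₙₐ[ℂ] N)
    (hφ : Topology.IsClosedEmbedding φ) : IsQuasitrace (fun x => τ (φ x)) := by
  obtain ⟨hpre, τ₂, hpre₂, hτ₂⟩ := h
  refine ⟨hpre.comp φ hφ, fun X => τ₂ (φ.mapMatrix X), hpre₂.comp _ hφ.matrix_map, fun x => ?_⟩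
  show τ (φ x) = τ₂ (φ.mapMatrix (Matrix.single 0 0 x))
  rw [hτ₂, NonUnitalStarAlgHom.mapMatrix_apply, Matrix.map_single]

theorem IsMatrixExt.comp {m : ℕ} {σ : Matrix (Fin m) (Fin m) N → ℂ} {τ : N → ℂ}
    (h : IsMatrixExt σ τ) (φ : M →⋆ₙₐ[ℂ] N) (hφ : Topology.IsClosedEmbedding φ) :
    IsMatrixExt (fun X => σ (φ.mapMatrix X)) (fun x => τ (φ x)) :=
  ⟨h.1.comp _ hφ.matrix_map, fun x j => by
    show σ (φ.mapMatrix _) = τ (φ x)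
    rw [NonUnitalStarAlgHom.mapMatrix_apply, Matrix.map_single, h.2]⟩

theorem RComparison.cuntzSubeq_mapMatrix (φ : M →⋆ₙₐ[ℂ] N) (hφ : Topology.IsClosedEmbedding φ)
    {e : M} {r : ℝ} (hr : RComparison (φ e) r) {m : ℕ} {a b : Matrix (Fin m) (Fin m) M}
    (ha : StarPos a) (hb : StarPos b)
    (hab : ∀ (τ : M → ℂ) (σ : Matrix (Fin m) (Fin m) M → ℂ) (da db : ℝ),
      IsQuasitrace τ → τ e = 1 → IsMatrixExt σ τ →
      HasDTau σ a da → HasDTau σ b db → da + r < db) :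
    CuntzSubeq (φ.mapMatrix a) (φ.mapMatrix b) :=
  hr m _ _ (ha.map _) (hb.map _) fun _ _ da db hτ hτ1 hσ hda hdb =>
    hab _ _ da db (hτ.comp φ hφ) hτ1 (hσ.comp φ hφ) (hda.comp _) (hdb.comp _)

end Transfer

section FixedPoints

variable {G A : Type*} [Group G] [CStarAlgebra A]

theorem isClosed_fixedAlg (α : G → A ≃⋆ₐ[ℂ] A) : IsClosed (fixedAlg α : Set A) := by
  show IsClosed {x : A | ∀ g, α g x = x}
  rw [Set.ofPred_forall]
  exact isClosed_iInter fun g => isClosed_eq (StarAlgEquiv.isometry (α g)).continuous continuous_id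

variable [Fintype G] [PartialOrder A] [StarOrderedRing A]

theorem cuntzSubeq_of_cuntzSubeq_mapMatrix_fixedAlg (α : G → A ≃⋆ₐ[ℂ] A)
    (hα : ∀ g h x, α (g * h) x = α g (α h x)) (hrok : RokhlinProperty α) {m : ℕ}
    {a b : Matrix (Fin m) (Fin m) (fixedAlg α)}
    (h : CuntzSubeq ((NonUnitalStarSubalgebraClass.subtype (fixedAlg α)).mapMatrix a)
      ((NonUnitalStarSubalgebraClass.subtype (fixedAlg α)).mapMatrix b)) :
    CuntzSubeq a b := by
  set ι := NonUnitalStarSubalgebraClass.subtype (fixedAlg α)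
  set β : G → CStarMatrix (Fin m) (Fin m) A ≃⋆ₐ[ℂ] CStarMatrix (Fin m) (Fin m) A :=
    fun g => (α g).mapCStarMatrix
  have hβ : ∀ g h M, β (g * h) M = β g (β h M) := fun g h M => by
    ext i j; exact hα g h (M i j)
  have hfix : ∀ c : Matrix (Fin m) (Fin m) (fixedAlg α),
      CStarMatrix.ofMatrix (ι.mapMatrix c) ∈ fixedAlg β := fun c g => by
    ext i j; exact (c i j).2 g
  obtain ⟨w, hw, hlim⟩ := CuntzSubeq.cuntzSubeqIn_fixedAlg hβ
    (rokhlinProperty_mapCStarMatrix hrok) (hfix a) (hfix b) h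
  have hrange : ∀ k, CStarMatrix.ofMatrix.symm (w k) ∈ Set.range ι.mapMatrix := fun k =>
    ⟨Matrix.of fun i j => ⟨w k i j, fun g => congrArg (· i j) (hw k g)⟩, rfl⟩
  exact CuntzSubeqIn.cuntzSubeq_of_isInducing _ Topology.IsInducing.subtypeVal.matrix_map
    ⟨_, hrange, hlim⟩

theorem rComparison_fixedAlg (α : G → A ≃⋆ₐ[ℂ] A) (hα : ∀ g h x, α (g * h) x = α g (α h x))
    (hrok : RokhlinProperty α) {r : ℝ} (hr : RComparison (1 : A) r) :
    RComparison (⟨1, one_mem_fixedAlg α⟩ : fixedAlg α) r := fun _ _ _ ha hb hab =>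
  cuntzSubeq_of_cuntzSubeq_mapMatrix_fixedAlg α hα hrok <|
    hr.cuntzSubeq_mapMatrix (NonUnitalStarSubalgebraClass.subtype (fixedAlg α))
      (isClosed_fixedAlg α).isClosedEmbedding_subtypeVal ha hb hab

end FixedPoints

end RC

theorem statement16_general {G : Type*} [Group G] [Fintype G]
    {A : Type*} [CStarAlgebra A] [PartialOrder A] [StarOrderedRing A]
    (α : G → A ≃⋆ₐ[ℂ] A)
    (hαmul : ∀ (g h : G) (x : A), α (g * h) x = α g (α h x))
    (hrok : RokhlinProperty α) :
    radiusCmp (⟨1, one_mem_fixedAlg α⟩ : ↥(fixedAlg α)) ≤ radiusCmp (1 : A) := by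
  refine sInf_le_sInf ?_
  rintro _ ⟨r, hr0, rfl, hr⟩
  exact ⟨r, hr0, rfl, rComparison_fixedAlg α hαmul hrok hr⟩

/-- Let `G` be a finite group, `A` a stably finite unital C*-algebra, and `α` an
action of `G` on `A` with the Rokhlin property.  Then `rc (A^α) ≤ rc (A)`. -/
theorem statement16 {G : Type*} [Group G] [Fintype G]
    {A : Type*} [CStarAlgebra A] [PartialOrder A] [StarOrderedRing A]
    (hsf : StablyFinite A)
    (α : G → A ≃⋆ₐ[ℂ] A)
    (hα1 : ∀ x : A, α 1 x = x)
    (hαmul : ∀ (g h : G) (x : A), α (g * h) x = α g (α h x))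
    (hrok : RokhlinProperty α) :
    radiusCmp (⟨1, one_mem_fixedAlg α⟩ : ↥(fixedAlg α)) ≤ radiusCmp (1 : A) :=
  statement16_general α hαmul hrok
end
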